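/- arXiv:0807.4051 — 11 statements merged into one kernel-verified Lean document; each statement's English description precedes it below -/
import Mathlib

section
/- Let p be a prime, A a commutative ring and 𝔞 ⊆ A an ideal such that A is 𝔞-adically complete and separated and A/𝔞 is a perfect ring of characteristic p. Then the ring homomorphism W(A) → W(A/𝔞) induced by the projection A → A/𝔞 admits a unique ring-homomorphism section s : W(A/𝔞) → W(A); moreover this section commutes with the Witt vector Frobenius, i.e. s ∘ f = f ∘ s. -/
/-!
Write `W(𝔞ᵏ)` for the Witt vectors with all coefficients in `𝔞ᵏ`. Since `p ∈ 𝔞` and the `n`-th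
coefficient polynomial of the Frobenius is `Xₙᵖ + p • (…)`, the Frobenius improves congruences:
`x ≡ y mod W(𝔞ᵏ)` implies `F x ≡ F y mod W(𝔞ᵏ⁺¹)`. So for any set-theoretic lift `ℓ` of
`W(A) → W(A/𝔞)`, the maps `y ↦ Fⁿ (ℓ (F⁻ⁿ y))` are ring homomorphisms modulo `W(𝔞ⁿ⁺¹)` and form
a Cauchy sequence; their limit is a section.

For uniqueness, `W(𝔞ᵏ)² ⊆ W(𝔞ᵏ⁺¹)` and `p • W(𝔞ᵏ) ⊆ W(𝔞ᵏ⁺¹)`. Over a perfect ring every Witt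
vector is `[b]ᵖ + p c`, so two ring maps out of `W(A/𝔞)` that agree modulo `W(𝔞ᵏ)` agree modulo
`W(𝔞ᵏ⁺¹)`, hence are equal by separatedness. Uniqueness gives Frobenius compatibility, because
`F ∘ s ∘ F⁻¹` is again a section.
-/

open Function

namespace WittVector

variable {p : ℕ} [Fact p.Prime]

local notation "𝕎" => WittVector p

section CoeffIdeal

variable {R : Type*} [CommRing R]

variable (p) in
/-- The ideal `W(I)` of Witt vectors all of whose coefficients lie in `I`. -/
noncomputable def coeffIdeal (I : Ideal R) : Ideal (𝕎 R) :=
  RingHom.ker (map (Ideal.Quotient.mk I))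

theorem sub_mem_coeffIdeal {I : Ideal R} {x y : 𝕎 R} :
    x - y ∈ coeffIdeal p I ↔ ∀ n, x.coeff n - y.coeff n ∈ I := by
  simp only [coeffIdeal, RingHom.sub_mem_ker_iff, WittVector.ext_iff, map_coeff,
    Ideal.Quotient.eq]

theorem mem_coeffIdeal {I : Ideal R} {x : 𝕎 R} : x ∈ coeffIdeal p I ↔ ∀ n, x.coeff n ∈ I := by
  simpa using sub_mem_coeffIdeal (I := I) (x := x) (y := 0)

theorem teichmuller_mem_coeffIdeal {I : Ideal R} {a : R} (ha : a ∈ I) :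
    teichmuller p a ∈ coeffIdeal p I := by
  refine mem_coeffIdeal.2 fun n => ?_
  rcases n with _ | n
  · rwa [teichmuller_coeff_zero]
  · rw [teichmuller_coeff_pos p a (n + 1) n.succ_pos]
    exact I.zero_mem

theorem verschiebung_mem_coeffIdeal {I : Ideal R} {x : 𝕎 R} (hx : x ∈ coeffIdeal p I) :
    verschiebung x ∈ coeffIdeal p I := by
  refine mem_coeffIdeal.2 fun n => ?_
  rcases n with _ | n
  · rw [verschiebung_coeff_zero]
    exact I.zero_mem
  · rw [verschiebung_coeff_succ]
    exact mem_coeffIdeal.1 hx n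

theorem exists_eq_teichmuller_add_verschiebung {I : Ideal R} {x : 𝕎 R}
    (hx : x ∈ coeffIdeal p I) :
    ∃ x' ∈ coeffIdeal p I, x = teichmuller p (x.coeff 0) + verschiebung x' := by
  set d := x - teichmuller p (x.coeff 0)
  have hd : d ∈ coeffIdeal p I :=
    sub_mem hx (teichmuller_mem_coeffIdeal (mem_coeffIdeal.1 hx 0))
  have hd0 : d.coeff 0 = 0 := by
    simpa [teichmuller_coeff_zero] using map_sub (constantCoeff (p := p) (R := R)) x
      (teichmuller p (x.coeff 0))
  refine ⟨d.shift 1, mem_coeffIdeal.2 fun n => mem_coeffIdeal.1 hd (1 + n), ?_⟩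
  have hV : verschiebung (d.shift 1) = d := by
    rw [verschiebung_shift d 0 (by simpa using hd0)]
    ext n
    rw [shift_coeff, zero_add]
  rw [hV, add_sub_cancel]

end CoeffIdeal

section Frobenius

variable {R S : Type*} [CommRing R] [CommRing S]

theorem map_aeval_coeff (g : R →+* S) (x : 𝕎 R) (P : MvPolynomial ℕ ℤ) :
    g (MvPolynomial.aeval x.coeff P) = MvPolynomial.aeval (map g x).coeff P := by
  rw [show (map g x).coeff = fun n => g (x.coeff n) from funext (map_coeff g x)]
  exact MvPolynomial.comp_aeval_apply x.coeff g.toIntAlgHom P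

theorem map_frobenius (g : R →+* S) (x : 𝕎 R) :
    map g (frobenius x) = frobenius (map g x) := by
  ext n
  rw [map_coeff, coeff_frobenius, coeff_frobenius, map_aeval_coeff]

theorem aeval_coeff_sub_mem {I : Ideal R} {x y : 𝕎 R} (h : x - y ∈ coeffIdeal p I)
    (P : MvPolynomial ℕ ℤ) : MvPolynomial.aeval x.coeff P - MvPolynomial.aeval y.coeff P ∈ I := by
  rw [← Ideal.Quotient.eq, map_aeval_coeff, map_aeval_coeff, (RingHom.sub_mem_ker_iff _).1 h]

variable {𝔞 : Ideal R}

theorem frobenius_sub_mem_coeffIdeal_pow_succ (hp𝔞 : (p : R) ∈ 𝔞) {k : ℕ} (hk : k ≠ 0)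
    {x y : 𝕎 R} (h : x - y ∈ coeffIdeal p (𝔞 ^ k)) :
    frobenius x - frobenius y ∈ coeffIdeal p (𝔞 ^ (k + 1)) := by
  refine sub_mem_coeffIdeal.2 fun n => ?_
  simp only [coeff_frobenius, frobeniusPoly, map_add, map_mul, map_pow, MvPolynomial.aeval_X,
    map_natCast]
  rw [add_sub_add_comm, ← mul_sub]
  refine add_mem (SModEq.sub_mem.1 ?_) ?_
  · exact SModEq.pow_add_one hp𝔞 hk (SModEq.sub_mem.2 (sub_mem_coeffIdeal.1 h n))
  · rw [pow_succ']
    exact Ideal.mul_mem_mul hp𝔞 (aeval_coeff_sub_mem h _)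

theorem frobenius_mem_coeffIdeal_pow_succ (hp𝔞 : (p : R) ∈ 𝔞) {k : ℕ} (hk : k ≠ 0)
    {x : 𝕎 R} (hx : x ∈ coeffIdeal p (𝔞 ^ k)) :
    frobenius x ∈ coeffIdeal p (𝔞 ^ (k + 1)) := by
  simpa using frobenius_sub_mem_coeffIdeal_pow_succ hp𝔞 hk (y := 0) (by simpa using hx)

theorem iterate_frobenius_sub_mem_coeffIdeal (hp𝔞 : (p : R) ∈ 𝔞) {x y : 𝕎 R}
    (h : x - y ∈ coeffIdeal p 𝔞) (n : ℕ) :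
    frobenius^[n] x - frobenius^[n] y ∈ coeffIdeal p (𝔞 ^ (n + 1)) := by
  induction n with
  | zero => simpa using h
  | succ n ih =>
    rw [iterate_succ_apply', iterate_succ_apply']
    exact frobenius_sub_mem_coeffIdeal_pow_succ hp𝔞 n.succ_ne_zero ih

theorem verschiebung_mul_mem_coeffIdeal_pow_succ (hp𝔞 : (p : R) ∈ 𝔞) {k : ℕ} (hk : k ≠ 0)
    (z : 𝕎 R) {x : 𝕎 R} (hx : x ∈ coeffIdeal p (𝔞 ^ k)) :
    verschiebung z * x ∈ coeffIdeal p (𝔞 ^ (k + 1)) := by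
  rw [← verschiebung_mul_frobenius]
  exact verschiebung_mem_coeffIdeal
    (Ideal.mul_mem_left _ _ (frobenius_mem_coeffIdeal_pow_succ hp𝔞 hk hx))

theorem mul_mem_coeffIdeal_pow_succ (hp𝔞 : (p : R) ∈ 𝔞) {k : ℕ} (hk : k ≠ 0)
    {x y : 𝕎 R} (hx : x ∈ coeffIdeal p (𝔞 ^ k)) (hy : y ∈ coeffIdeal p (𝔞 ^ k)) :
    x * y ∈ coeffIdeal p (𝔞 ^ (k + 1)) := by
  obtain ⟨x', -, hx_eq⟩ := exists_eq_teichmuller_add_verschiebung hx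
  obtain ⟨y', -, hy_eq⟩ := exists_eq_teichmuller_add_verschiebung hy
  have hx0 := mem_coeffIdeal.1 hx 0
  have hxy0 : x.coeff 0 * y.coeff 0 ∈ 𝔞 ^ (k + 1) := by
    have := Ideal.mul_mem_mul hx0 (mem_coeffIdeal.1 hy 0)
    rw [← pow_add] at this
    exact Ideal.pow_le_pow_right (by omega) this
  rw [hx_eq, add_mul]
  refine add_mem ?_ (verschiebung_mul_mem_coeffIdeal_pow_succ hp𝔞 hk x' hy)
  rw [hy_eq, mul_add, ← map_mul, mul_comm _ (verschiebung y')]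
  exact add_mem (teichmuller_mem_coeffIdeal hxy0)
    (verschiebung_mul_mem_coeffIdeal_pow_succ hp𝔞 hk y' (teichmuller_mem_coeffIdeal hx0))

theorem natCast_mul_mem_coeffIdeal_pow_succ (hp𝔞 : (p : R) ∈ 𝔞) {k : ℕ} (hk : k ≠ 0)
    {x : 𝕎 R} (hx : x ∈ coeffIdeal p (𝔞 ^ k)) :
    (p : 𝕎 R) * x ∈ coeffIdeal p (𝔞 ^ (k + 1)) := by
  rw [mul_comm, ← frobenius_verschiebung]
  exact frobenius_mem_coeffIdeal_pow_succ hp𝔞 hk (verschiebung_mem_coeffIdeal hx)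

end Frobenius

section Complete

variable {A : Type*} [CommRing A] {𝔞 : Ideal A}

theorem eq_of_forall_sub_mem_coeffIdeal [IsHausdorff 𝔞 A] {x y : 𝕎 A}
    (h : ∀ n, x - y ∈ coeffIdeal p (𝔞 ^ (n + 1))) : x = y := by
  ext i
  refine (IsHausdorff.eq_iff_smodEq (I := 𝔞)).2 fun n => ?_
  rw [SModEq.sub_mem, smul_eq_mul, Ideal.mul_top]
  exact Ideal.pow_le_pow_right n.le_succ (sub_mem_coeffIdeal.1 (h n) i)

theorem exists_forall_sub_mem_coeffIdeal [IsPrecomplete 𝔞 A] (c : ℕ → 𝕎 A)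
    (hc : ∀ n, c (n + 1) - c n ∈ coeffIdeal p (𝔞 ^ (n + 1))) :
    ∃ x, ∀ n, x - c n ∈ coeffIdeal p (𝔞 ^ (n + 1)) := by
  have hlim (i : ℕ) : ∃ L : A, ∀ n, (c n).coeff i ≡ L [SMOD 𝔞 ^ n • (⊤ : Ideal A)] := by
    refine IsPrecomplete.prec ‹_›
      ((AdicCompletion.isAdicCauchy_iff 𝔞 A (fun n => (c n).coeff i)).2 fun n => ?_)
    rw [SModEq.sub_mem, smul_eq_mul, Ideal.mul_top, sub_mem_comm_iff]
    exact Ideal.pow_le_pow_right n.le_succ (sub_mem_coeffIdeal.1 (hc n) i)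
  choose L hL using hlim
  refine ⟨mk p L, fun n => sub_mem_coeffIdeal.2 fun i => ?_⟩
  have h1 := hL i (n + 1)
  rw [SModEq.sub_mem, smul_eq_mul, Ideal.mul_top, sub_mem_comm_iff] at h1
  rw [coeff_mk, ← sub_add_sub_cancel _ ((c (n + 1)).coeff i)]
  exact add_mem h1 (sub_mem_coeffIdeal.1 (hc n) i)

theorem exists_ringHom_forall_sub_mem_coeffIdeal [IsAdicComplete 𝔞 A] {X : Type*}
    [NonAssocSemiring X] (c : ℕ → X → 𝕎 A)
    (hc : ∀ n y, c (n + 1) y - c n y ∈ coeffIdeal p (𝔞 ^ (n + 1)))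
    (hadd : ∀ n x y, c n (x + y) - (c n x + c n y) ∈ coeffIdeal p (𝔞 ^ (n + 1)))
    (hmul : ∀ n x y, c n (x * y) - c n x * c n y ∈ coeffIdeal p (𝔞 ^ (n + 1)))
    (hone : ∀ n, c n 1 - 1 ∈ coeffIdeal p (𝔞 ^ (n + 1))) :
    ∃ s : X →+* 𝕎 A, ∀ n y, s y - c n y ∈ coeffIdeal p (𝔞 ^ (n + 1)) := by
  choose s hs using fun y => exists_forall_sub_mem_coeffIdeal (fun n => c n y) (hc · y)
  simp only [← Ideal.Quotient.eq] at hs hadd hmul hone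
  have eq_of_mk_eq {a b : 𝕎 A} (h : ∀ n, Ideal.Quotient.mk (coeffIdeal p (𝔞 ^ (n + 1))) a =
      Ideal.Quotient.mk _ b) : a = b :=
    eq_of_forall_sub_mem_coeffIdeal (𝔞 := 𝔞) fun n => Ideal.Quotient.eq.1 (h n)
  have map_one : s 1 = 1 := eq_of_mk_eq fun n => by rw [hs, hone]
  have map_mul x y : s (x * y) = s x * s y :=
    eq_of_mk_eq fun n => by rw [map_mul, hs, hs, hs, hmul, map_mul]
  have map_add x y : s (x + y) = s x + s y :=
    eq_of_mk_eq fun n => by rw [map_add, hs, hs, hs, hadd, map_add]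
  exact ⟨RingHom.mk' ⟨⟨s, map_one⟩, map_mul⟩ map_add, fun n y => Ideal.Quotient.eq.1 (hs y n)⟩

end Complete

section Perfect

variable {B : Type*} [CommRing B] [CharP B p] [PerfectRing B p]

theorem exists_eq_teichmuller_pow_add_natCast_mul (y : 𝕎 B) :
    ∃ (b : B) (c : 𝕎 B), y = teichmuller p b ^ p + p * c := by
  obtain ⟨c, hc⟩ := dvd_sub_sum_teichmuller_iterateFrobeniusEquiv_coeff y 0
  refine ⟨(_root_.frobeniusEquiv B p).symm (y.coeff 0), c, ?_⟩
  rw [show Finset.Iic 0 = {0} from rfl, Finset.sum_singleton] at hc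
  simp only [pow_zero, RingAut.one_apply, mul_one, zero_add, pow_one] at hc
  rw [← map_pow, ← frobenius_def, frobenius_apply_frobeniusEquiv_symm]
  linear_combination hc

theorem ringHom_sub_mem_of_forall_sub_mem {T : Type*} [CommRing T] {J K : Ideal T}
    (hJJ : J * J ≤ K) (hpJ : ∀ x ∈ J, (p : T) * x ∈ K) (f g : 𝕎 B →+* T)
    (hfg : ∀ y, f y - g y ∈ J) (y : 𝕎 B) : f y - g y ∈ K := by
  obtain ⟨b, c, rfl⟩ := exists_eq_teichmuller_pow_add_natCast_mul y
  have hJp : J * (J ⊔ Ideal.span {(p : T)}) ≤ K := by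
    rw [Ideal.mul_sup]
    refine sup_le hJJ (Ideal.mul_le.2 fun x hx z hz => ?_)
    obtain ⟨u, rfl⟩ := Ideal.mem_span_singleton.1 hz
    rw [mul_left_comm, ← mul_assoc]
    exact K.mul_mem_right u (hpJ x hx)
  have hpow : f (teichmuller p b) ^ p - g (teichmuller p b) ^ p ∈ K :=
    hJp <| SModEq.sub_mem.1 <|
      SModEq.pow_mul_of_le (Ideal.mem_sup_right (Ideal.mem_span_singleton_self _))
        (SModEq.sub_mem.2 (hfg _)) le_sup_left
  simp only [map_add, map_pow, map_mul, map_natCast]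
  rw [add_sub_add_comm, ← mul_sub]
  exact add_mem hpow (hpJ _ (hfg c))

end Perfect

section QuotientSection

variable {A : Type*} [CommRing A] {𝔞 : Ideal A}

theorem ringHom_ext_of_map_comp_eq {B : Type*} [CommRing B] [CharP B p] [PerfectRing B p]
    [IsHausdorff 𝔞 A] (hp𝔞 : (p : A) ∈ 𝔞) {f g : 𝕎 B →+* 𝕎 A}
    (hfg : (map (Ideal.Quotient.mk 𝔞)).comp f = (map (Ideal.Quotient.mk 𝔞)).comp g) : f = g := by
  have key (n : ℕ) : ∀ y, f y - g y ∈ coeffIdeal p (𝔞 ^ (n + 1)) := by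
    induction n with
    | zero =>
      rw [zero_add, pow_one]
      exact fun y => (RingHom.sub_mem_ker_iff _).2 (RingHom.congr_fun hfg y)
    | succ n ih =>
      exact ringHom_sub_mem_of_forall_sub_mem
        (Ideal.mul_le.2 fun _ hx _ hy => mul_mem_coeffIdeal_pow_succ hp𝔞 n.succ_ne_zero hx hy)
        (fun _ hx => natCast_mul_mem_coeffIdeal_pow_succ hp𝔞 n.succ_ne_zero hx) f g ih
  exact RingHom.ext fun y => eq_of_forall_sub_mem_coeffIdeal (key · y)

theorem exists_section_map_mk [IsAdicComplete 𝔞 A] [CharP (A ⧸ 𝔞) p]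
    [PerfectRing (A ⧸ 𝔞) p] :
    ∃ s : 𝕎 (A ⧸ 𝔞) →+* 𝕎 A, (map (Ideal.Quotient.mk 𝔞)).comp s = RingHom.id _ := by
  have hp𝔞 : (p : A) ∈ 𝔞 := 𝔞.natCast_mem_of_charP_quotient p
  set π := map (p := p) (Ideal.Quotient.mk 𝔞)
  obtain ⟨ℓ, hℓ⟩ := (map_surjective _ Ideal.Quotient.mk_surjective).hasRightInverse (f := π)
  set ψ : 𝕎 (A ⧸ 𝔞) →+* 𝕎 (A ⧸ 𝔞) := (frobeniusEquiv p (A ⧸ 𝔞)).symm.toRingHom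
  have hψ (y : 𝕎 (A ⧸ 𝔞)) : frobenius (ψ y) = y := (frobeniusEquiv p _).apply_symm_apply y
  let c (n : ℕ) (y : 𝕎 (A ⧸ 𝔞)) : 𝕎 A := frobenius^[n] (ℓ (ψ^[n] y))
  have approx (n : ℕ) (y : 𝕎 (A ⧸ 𝔞)) (z : 𝕎 A) (hz : π z = ψ^[n] y) :
      c n y - frobenius^[n] z ∈ coeffIdeal p (𝔞 ^ (n + 1)) :=
    iterate_frobenius_sub_mem_coeffIdeal hp𝔞 ((RingHom.sub_mem_ker_iff π).2 (by rw [hz, hℓ])) n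
  obtain ⟨s, hs⟩ := exists_ringHom_forall_sub_mem_coeffIdeal c
    (fun n y => by
      have h := approx n y (frobenius (ℓ (ψ^[n + 1] y)))
        (by rw [map_frobenius, hℓ, iterate_succ_apply', hψ])
      rw [← iterate_succ_apply] at h
      exact sub_mem_comm_iff.1 h)
    (fun n x y => by
      have h := approx n (x + y) (ℓ (ψ^[n] x) + ℓ (ψ^[n] y))
        (by rw [map_add, hℓ, hℓ, iterate_map_add])
      rwa [iterate_map_add] at h)
    (fun n x y => by
      have h := approx n (x * y) (ℓ (ψ^[n] x) * ℓ (ψ^[n] y))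
        (by rw [map_mul, hℓ, hℓ, iterate_map_mul])
      rwa [iterate_map_mul] at h)
    (fun n => by
      have h := approx n 1 1 (by rw [map_one, iterate_map_one])
      rwa [iterate_map_one] at h)
  refine ⟨s, RingHom.ext fun y => ?_⟩
  have h0 := hs 0 y
  rw [zero_add, pow_one] at h0
  exact ((RingHom.sub_mem_ker_iff π).1 h0).trans (hℓ y)

theorem map_comp_frobenius_comp_frobeniusEquiv_symm {B : Type*} [CommRing B] [CharP B p]
    [PerfectRing B p] (g : A →+* B) {f : 𝕎 B →+* 𝕎 A} (hf : (map g).comp f = RingHom.id _) :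
    (map g).comp (frobenius.comp (f.comp (frobeniusEquiv p B).symm.toRingHom)) =
      RingHom.id _ := by
  ext1 y
  have hfy := RingHom.congr_fun hf ((frobeniusEquiv p B).symm y)
  simp only [RingHom.comp_apply, RingHom.id_apply, RingEquiv.toRingHom_eq_coe,
    RingEquiv.coe_toRingHom] at hfy ⊢
  rw [map_frobenius, hfy]
  exact (frobeniusEquiv p B).apply_symm_apply y

end QuotientSection

end WittVector

/-- Let `p` be a prime, `A` a commutative ring and `𝔞 ⊆ A` an ideal
such that `A` is `𝔞`-adically complete and separated and `A/𝔞` is a perfect ring of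
characteristic `p`.  Then the ring homomorphism `W(A) → W(A/𝔞)` induced by the
projection admits a unique ring-homomorphism section `s`, and this section commutes
with the Witt vector Frobenius. -/
theorem witt_section_of_quotient_perfect
    (p : ℕ) [Fact p.Prime] (A : Type*) [CommRing A] (𝔞 : Ideal A)
    [IsAdicComplete 𝔞 A] [CharP (A ⧸ 𝔞) p] [PerfectRing (A ⧸ 𝔞) p] :
    (∃! s : WittVector p (A ⧸ 𝔞) →+* WittVector p A,
        (WittVector.map (Ideal.Quotient.mk 𝔞)).comp s = RingHom.id _) ∧
    (∀ s : WittVector p (A ⧸ 𝔞) →+* WittVector p A,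
        (WittVector.map (Ideal.Quotient.mk 𝔞)).comp s = RingHom.id _ →
        s.comp WittVector.frobenius = (WittVector.frobenius).comp s) := by
  have hp𝔞 : (p : A) ∈ 𝔞 := 𝔞.natCast_mem_of_charP_quotient p
  obtain ⟨s, hs⟩ := WittVector.exists_section_map_mk (p := p) (𝔞 := 𝔞)
  refine ⟨⟨s, hs, fun t ht => WittVector.ringHom_ext_of_map_comp_eq hp𝔞 (ht.trans hs.symm)⟩,
    fun t ht => ?_⟩
  set φ := WittVector.frobeniusEquiv p (A ⧸ 𝔞)
  have hconj : WittVector.frobenius.comp (t.comp φ.symm.toRingHom) = t :=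
    WittVector.ringHom_ext_of_map_comp_eq hp𝔞
      ((WittVector.map_comp_frobenius_comp_frobeniusEquiv_symm _ ht).trans ht.symm)
  ext1 y
  conv_lhs => rw [← hconj]
  exact congrArg (WittVector.frobenius ∘ t) (φ.symm_apply_apply y)
end

section
/- Let p be a prime, A a commutative ring and 𝔞 ⊆ A a nilpotent ideal (𝔞^N = 0 for some N). Then the set Ŵ(𝔞) of Witt vectors x ∈ W(A) such that every component of x lies in 𝔞 and all but finitely many components of x are zero is an ideal of W(A); in particular it is closed under addition. -/
/-!
In `W(A[t])`, multiplication by the Teichmüller lift `[t]` scales the `n`-th component by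
`t ^ p ^ n`. So `x ↦ [t] x` identifies the Witt vectors `x` with `xₙ ∈ 𝔞 ^ ⌈p ^ n / q⌉` for all
`n` with the Witt vectors over the subring of `A[t]` whose `t ^ j`-coefficients lie in
`𝔞 ^ ⌈j / q⌉`; as that subring contains `A`, these `x` form an ideal `I q` of `W(A)`. (This is
the weighted homogeneity of the Witt addition and multiplication polynomials in disguise.)
A Witt vector with components in `𝔞` that vanish beyond index `m` lies in `I (p ^ m)`; conversely,
as `𝔞` is nilpotent, the components of an element of `I q` lie in `𝔞` and almost all vanish.
So `Ŵ(𝔞)` is the increasing union of the ideals `I (p ^ m)`.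
-/

open Polynomial

theorem Nat.add_ceilDiv_le (a b q : ℕ) : (a + b) ⌈/⌉ q ≤ a ⌈/⌉ q + b ⌈/⌉ q := by
  rcases Nat.eq_zero_or_pos q with rfl | hq
  · simp
  rw [ceilDiv_le_iff_le_mul hq, mul_add]
  exact add_le_add (le_smul_ceilDiv hq) (le_smul_ceilDiv hq)

namespace Ideal

variable {A : Type*} [CommRing A]

/-- For `q = 1` this is `reesAlgebra 𝔞`. -/
def ceilReesAlgebra (𝔞 : Ideal A) (q : ℕ) : Subalgebra A A[X] where
  carrier := {f | ∀ j, f.coeff j ∈ 𝔞 ^ (j ⌈/⌉ q)}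
  mul_mem' hf hg j := by
    rw [coeff_mul]
    refine sum_mem _ fun ik hik => ?_
    rw [← Finset.HasAntidiagonal.mem_antidiagonal.mp hik]
    refine pow_le_pow_right (Nat.add_ceilDiv_le _ _ _) ?_
    rw [pow_add]
    exact mul_mem_mul (hf _) (hg _)
  add_mem' hf hg j := by
    rw [coeff_add]
    exact add_mem (hf j) (hg j)
  algebraMap_mem' r j := by
    rw [Polynomial.algebraMap_apply, coeff_C]
    split_ifs with h
    · simp [h]
    · exact zero_mem _

theorem monomial_mem_ceilReesAlgebra {𝔞 : Ideal A} {q j : ℕ} {r : A} :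
    monomial j r ∈ 𝔞.ceilReesAlgebra q ↔ r ∈ 𝔞 ^ (j ⌈/⌉ q) := by
  refine ⟨fun h => by simpa using h j, fun h i => ?_⟩
  rw [coeff_monomial]
  split_ifs with hij
  · exact hij ▸ h
  · exact zero_mem _

end Ideal

namespace WittVector

variable {p : ℕ} [hp : Fact p.Prime] {R S A : Type*} [CommRing R] [CommRing S] [CommRing A]

theorem ghostComponent_map (f : R →+* S) (x : WittVector p R) (n : ℕ) :
    ghostComponent n (map f x) = f (ghostComponent n x) := by
  simp only [ghostComponent_apply, aeval_wittPolynomial, map_sum, map_mul, map_pow, map_natCast,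
    map_coeff]

theorem ghostMap_injective_of_injective [Invertible (p : S)] (f : R →+* S)
    (hf : Function.Injective f) : Function.Injective (ghostMap : WittVector p R → ℕ → R) := by
  intro x y h
  apply map_injective f hf
  apply (ghostMap.bijective_of_invertible p S).injective
  funext n
  have := congrFun h n
  simp only [ghostMap_apply] at this ⊢
  rw [ghostComponent_map, ghostComponent_map, this]

theorem coeff_teichmuller_mul (a : R) (x : WittVector p R) (n : ℕ) :
    (teichmuller p a * x).coeff n = a ^ p ^ n * x.coeff n := by
  let a₀ : MvPolynomial (Option ℕ) ℤ := MvPolynomial.X none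
  let x₀ : WittVector p (MvPolynomial (Option ℕ) ℤ) := mk p fun k => MvPolynomial.X (some k)
  have universal :
      teichmuller p a₀ * x₀ = mk p fun k => a₀ ^ p ^ k * MvPolynomial.X (some k) := by
    have hpu : IsUnit (p : MvPolynomial (Option ℕ) ℚ) := by
      simpa using ((Nat.cast_ne_zero.mpr hp.out.ne_zero : (p : ℚ) ≠ 0).isUnit.map
        (algebraMap ℚ (MvPolynomial (Option ℕ) ℚ)))
    have := hpu.invertible
    apply ghostMap_injective_of_injective (S := MvPolynomial (Option ℕ) ℚ)
      (MvPolynomial.map (Int.castRingHom ℚ)) (MvPolynomial.map_injective _ Int.cast_injective)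
    funext k
    rw [ghostMap_apply, ghostMap_apply, map_mul, ghostComponent_teichmuller, ghostComponent_apply,
      ghostComponent_apply, aeval_wittPolynomial, aeval_wittPolynomial, Finset.mul_sum]
    refine Finset.sum_congr rfl fun i hi => ?_
    simp only [x₀, coeff_mk]
    rw [mul_pow, ← pow_mul, ← pow_add, Nat.add_sub_cancel' (Finset.mem_range_succ_iff.mp hi)]
    ring
  let φ : MvPolynomial (Option ℕ) ℤ →+* R :=
    (MvPolynomial.aeval fun o => o.elim a x.coeff).toRingHom
  have hx : map φ x₀ = x := by ext k; simp [φ, x₀]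
  have := congrArg (fun z => (map φ z).coeff n) universal
  rw [map_mul, map_teichmuller, hx] at this
  simpa [φ, a₀] using this

theorem mem_range_map_subtype_iff (T : Subring R) (x : WittVector p R) :
    x ∈ (map T.subtype).range ↔ ∀ n, x.coeff n ∈ T := by
  refine ⟨?_, fun h => ⟨mk p fun n => ⟨x.coeff n, h n⟩, by ext n; simp⟩⟩
  rintro ⟨y, rfl⟩ n
  simp

theorem teichmuller_X_mul_map_C_mem_iff {𝔞 : Ideal A} {q : ℕ} (x : WittVector p A) :
    teichmuller p X * map C x ∈ (map (𝔞.ceilReesAlgebra q).toSubring.subtype).range ↔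
      ∀ n, x.coeff n ∈ 𝔞 ^ (p ^ n ⌈/⌉ q) := by
  simp only [mem_range_map_subtype_iff, coeff_teichmuller_mul, map_coeff, Subalgebra.mem_toSubring]
  refine forall_congr' fun n => ?_
  rw [X_pow_mul, C_mul_X_pow_eq_monomial, Ideal.monomial_mem_ceilReesAlgebra]

theorem map_C_mem_range {𝔞 : Ideal A} {q : ℕ} (r : WittVector p A) :
    map C r ∈ (map (𝔞.ceilReesAlgebra q).toSubring.subtype).range :=
  (mem_range_map_subtype_iff _ _).mpr fun n => (𝔞.ceilReesAlgebra q).algebraMap_mem (r.coeff n)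

variable (p) in
def ceilPowIdeal (𝔞 : Ideal A) (q : ℕ) : Ideal (WittVector p A) where
  carrier := {x | ∀ n, x.coeff n ∈ 𝔞 ^ (p ^ n ⌈/⌉ q)}
  zero_mem' n := by simp
  add_mem' {x y} hx hy := (teichmuller_X_mul_map_C_mem_iff (x + y)).mp <| by
    rw [map_add, mul_add]
    exact add_mem ((teichmuller_X_mul_map_C_mem_iff x).mpr hx)
      ((teichmuller_X_mul_map_C_mem_iff y).mpr hy)
  smul_mem' r x hx := (teichmuller_X_mul_map_C_mem_iff (r * x)).mp <| by
    rw [map_mul, mul_left_comm]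
    exact mul_mem (map_C_mem_range r) ((teichmuller_X_mul_map_C_mem_iff x).mpr hx)

variable {𝔞 : Ideal A} {q : ℕ} {x : WittVector p A}

theorem ceilPowIdeal_mono {q' : ℕ} (hq : 0 < q) (h : q ≤ q') :
    ceilPowIdeal p 𝔞 q ≤ ceilPowIdeal p 𝔞 q' := fun _ hx n =>
  Ideal.pow_le_pow_right ((ceilDiv_le_iff_le_mul (hq.trans_le h)).mpr
    ((le_smul_ceilDiv hq).trans (Nat.mul_le_mul_right _ h))) (hx n)

theorem coeff_mem_of_mem_ceilPowIdeal (hq : 0 < q) (hx : x ∈ ceilPowIdeal p 𝔞 q) (n : ℕ) :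
    x.coeff n ∈ 𝔞 := by
  refine Ideal.pow_le_self ?_ (hx n)
  rw [Ne, ← Nat.le_zero, ceilDiv_le_iff_le_mul hq, mul_zero, Nat.le_zero]
  exact pow_ne_zero n hp.out.ne_zero

theorem finite_setOf_coeff_ne_zero_of_mem_ceilPowIdeal {N : ℕ} (hN : 𝔞 ^ N = ⊥) (hq : 0 < q)
    (hx : x ∈ ceilPowIdeal p 𝔞 q) : {n | x.coeff n ≠ 0}.Finite := by
  refine (Set.finite_Iio (q * N)).subset fun n hn => ?_
  by_contra hle
  have hlt : q * N < q * (p ^ n ⌈/⌉ q) :=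
    calc q * N ≤ n := not_lt.mp hle
      _ < p ^ n := Nat.lt_pow_self hp.out.one_lt
      _ ≤ q * (p ^ n ⌈/⌉ q) := le_smul_ceilDiv hq
  have := Ideal.pow_le_pow_right (Nat.lt_of_mul_lt_mul_left hlt).le (hx n)
  exact hn (by simpa [hN] using this)

theorem exists_mem_ceilPowIdeal (hx : ∀ n, x.coeff n ∈ 𝔞) (hfin : {n | x.coeff n ≠ 0}.Finite) :
    ∃ m, x ∈ ceilPowIdeal p 𝔞 (p ^ m) := by
  obtain ⟨m, hm⟩ := hfin.bddAbove
  refine ⟨m, fun n => ?_⟩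
  by_cases h : x.coeff n = 0
  · simp [h]
  have hpow : p ^ n ≤ p ^ m * 1 := by simpa using Nat.pow_le_pow_right hp.out.pos (hm h)
  exact Ideal.pow_le_pow_right ((ceilDiv_le_iff_le_mul (pow_pos hp.out.pos m)).mpr hpow)
    (by simpa using hx n)

end WittVector

open WittVector

/-- Let `p` be a prime, `A` a commutative ring and `𝔞 ⊆ A` a nilpotent
ideal.  Then the set `Ŵ(𝔞)` of Witt vectors all of whose components lie in `𝔞` and all
but finitely many of whose components are zero is an ideal of `W(A)`; in particular it
is closed under addition. -/
theorem wittHat_isIdeal_of_nilpotent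
    (p : ℕ) [Fact p.Prime] (A : Type*) [CommRing A] (𝔞 : Ideal A)
    (N : ℕ) (hN : 𝔞 ^ N = ⊥) :
    ∃ I : Ideal (WittVector p A),
      (I : Set (WittVector p A)) =
        {x : WittVector p A | (∀ n, x.coeff n ∈ 𝔞) ∧ {n | x.coeff n ≠ 0}.Finite} := by
  have hp := (Fact.out : p.Prime).pos
  have hmono : Monotone fun m => ceilPowIdeal p 𝔞 (p ^ m) := fun m m' h =>
    ceilPowIdeal_mono (pow_pos hp m) (Nat.pow_le_pow_right hp h)
  refine ⟨⨆ m, ceilPowIdeal p 𝔞 (p ^ m), ?_⟩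
  rw [Submodule.coe_iSup_of_directed _ hmono.directed_le]
  ext x
  simp only [Set.mem_iUnion, SetLike.mem_coe]
  exact ⟨fun ⟨m, hx⟩ => ⟨coeff_mem_of_mem_ceilPowIdeal (pow_pos hp m) hx,
    finite_setOf_coeff_ne_zero_of_mem_ceilPowIdeal hN (pow_pos hp m) hx⟩,
    fun ⟨hx, hfin⟩ => exists_mem_ceilPowIdeal hx hfin⟩
end

section
/- Let p be a prime, A a commutative ring and 𝔞 ⊆ A an ideal such that A is 𝔞-adically complete and separated and A/𝔞 is a perfect ring of characteristic p; if p = 2 assume in addition that 2 is invertible in A or 2·A = 0. Then any subring 𝕎 of W(A) satisfying: (i) the Frobenius f maps 𝕎 into itself, (ii) 𝕎 ∩ W(𝔞) = Ŵ(𝔞), and (iii) 𝕎 surjects onto W(A/𝔞), is also stable under the Verschiebung v of W(A). -/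
open WittVector

/-- The set `W(𝔞)` of Witt vectors all of whose components lie in `𝔞`. -/
def wittIn (p : ℕ) [Fact p.Prime] {A : Type*} [CommRing A] (𝔞 : Ideal A) :
    Set (WittVector p A) :=
  {x | ∀ n, x.coeff n ∈ 𝔞}

/-- The set `Ŵ(𝔞)` of Witt vectors whose components lie in `𝔞` and converge to zero
`𝔞`-adically. -/
def wittHat (p : ℕ) [Fact p.Prime] {A : Type*} [CommRing A] (𝔞 : Ideal A) :
    Set (WittVector p A) :=
  {x | (∀ n, x.coeff n ∈ 𝔞) ∧ ∀ k, {n | x.coeff n ∉ 𝔞 ^ k}.Finite}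

/-! The projection formula `v (x * F y) = v x * y` gives `v x = v 1 * y - v (F y - x)` for any `y`.
Choosing `y ∈ 𝕎` lifting `F⁻¹ (x mod 𝔞)` (perfectness and surjectivity) puts `F y - x` in
`𝕎 ∩ W(𝔞) = Ŵ(𝔞)`, which is `v`-stable, so everything reduces to `v 1 ∈ 𝕎`. If `2 · A = 0` then
`v 1 = v (F 1) = p`. For odd `p`, the Witt vector `p - v 1` has ghost components `(p, 0, 0, …)`;
over `ℤ` this forces `p ^ (n + 1)` to divide its `n`-th component, so `p - v 1 ∈ Ŵ(𝔞)`
because `p ∈ 𝔞`. -/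

open Finset

theorem two_mul_add_one_le_add_mul_pow {p : ℕ} (hp3 : 3 ≤ p) (i m : ℕ) :
    2 * (i + m + 1) + 1 ≤ i + (i + 1) * p ^ (m + 1) := by
  have hpow : 2 * (m + 1) + 1 ≤ p ^ (m + 1) := by
    have := one_add_mul_le_pow (a := (2 : ℤ)) (by norm_num) (m + 1)
    have h3 : 3 ^ (m + 1) ≤ p ^ (m + 1) := Nat.pow_le_pow_left hp3 _
    zify at h3 ⊢
    push_cast at this ⊢
    linarith
  nlinarith

section Integral

variable {p : ℕ} [hp : Fact p.Prime]

theorem ghostComponent_eq_sum {R : Type*} [CommRing R] (x : WittVector p R) (n : ℕ) :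
    ghostComponent n x = ∑ i ∈ range (n + 1), (p : R) ^ i * x.coeff i ^ p ^ (n - i) := by
  rw [ghostComponent_apply, aeval_wittPolynomial]

theorem pow_succ_dvd_coeff_of_ghostComponent_succ_eq_zero (hp2 : p ≠ 2) (x : WittVector p ℤ)
    (h0 : (p : ℤ) ∣ x.coeff 0) (hghost : ∀ n, ghostComponent (n + 1) x = 0) (n : ℕ) :
    (p : ℤ) ^ (n + 1) ∣ x.coeff n := by
  have hp3 : 3 ≤ p := by have := hp.out.two_le; omega
  induction n using Nat.strong_induction_on with
  | _ n ih =>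
  cases n with
  | zero => simpa using h0
  | succ n =>
    -- `p ^ (n+1) x_(n+1) = -∑_{i ≤ n} p ^ i x_i ^ p ^ (n+1-i)`, each summand divisible by
    -- `p ^ (2n+3)` once `p ≥ 3`.
    have hsum := ghostComponent_eq_sum x (n + 1)
    rw [hghost, sum_range_succ, Nat.sub_self, pow_zero, pow_one] at hsum
    have hdvd : (p : ℤ) ^ (n + 1) * (p : ℤ) ^ (n + 2) ∣ (p : ℤ) ^ (n + 1) * x.coeff (n + 1) := by
      rw [← pow_add, eq_neg_of_add_eq_zero_right hsum.symm]
      refine (dvd_sum fun i hi => ?_).neg_right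
      obtain ⟨m, rfl⟩ := Nat.exists_eq_add_of_le (mem_range_succ_iff.1 hi)
      calc (p : ℤ) ^ (i + m + 1 + (i + m + 2)) ∣ (p : ℤ) ^ (i + (i + 1) * p ^ (m + 1)) :=
            pow_dvd_pow _ (by have := two_mul_add_one_le_add_mul_pow hp3 i m; omega)
        _ = (p : ℤ) ^ i * ((p : ℤ) ^ (i + 1)) ^ p ^ (m + 1) := by ring
        _ ∣ (p : ℤ) ^ i * x.coeff i ^ p ^ (i + m + 1 - i) := by
            rw [show i + m + 1 - i = m + 1 by omega]
            exact mul_dvd_mul_left _ (pow_dvd_pow_of_dvd (ih i (by omega)) _)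
    exact (mul_dvd_mul_iff_left (pow_ne_zero _ (mod_cast hp.out.ne_zero))).1 hdvd

theorem ghostComponent_succ_natCast_sub_verschiebung_one {R : Type*} [CommRing R] (n : ℕ) :
    ghostComponent (n + 1) ((p : WittVector p R) - verschiebung 1) = 0 := by
  simp [ghostComponent_verschiebung]

theorem coeff_zero_natCast_sub_verschiebung_one {R : Type*} [CommRing R] :
    ((p : WittVector p R) - verschiebung 1).coeff 0 = (p : R) := by
  have h := ghostComponent_eq_sum ((p : WittVector p R) - verschiebung 1) 0
  simp only [map_sub, map_natCast, ghostComponent_zero_verschiebung, sub_zero] at h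
  simpa using h.symm

end Integral

section Adic

variable {p : ℕ} [hp : Fact p.Prime] {A : Type*} [CommRing A] {𝔞 : Ideal A}

theorem mem_wittIn_iff_map_eq_zero {x : WittVector p A} :
    x ∈ wittIn p 𝔞 ↔ WittVector.map (Ideal.Quotient.mk 𝔞) x = 0 := by
  simp only [wittIn, Set.mem_ofPred_eq, WittVector.ext_iff, map_coeff, zero_coeff,
    Ideal.Quotient.eq_zero_iff_mem]

theorem mem_wittHat_of_coeff_mem_pow {x : WittVector p A} (hx : ∀ n, x.coeff n ∈ 𝔞 ^ (n + 1)) :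
    x ∈ wittHat p 𝔞 := by
  refine ⟨fun n => Ideal.pow_le_self n.succ_ne_zero (hx n),
    fun k => (Set.finite_Iio k).subset fun n hn => ?_⟩
  by_contra hnk
  exact hn (Ideal.pow_le_pow_right (by simp only [Set.mem_Iio] at hnk; omega) (hx n))

theorem verschiebung_mem_wittHat {x : WittVector p A} (hx : x ∈ wittHat p 𝔞) :
    verschiebung x ∈ wittHat p 𝔞 := by
  obtain ⟨hmem, hfin⟩ := hx
  refine ⟨fun n => ?_, fun k => ((hfin k).image (· + 1)).subset fun n hn => ?_⟩
  · cases n with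
    | zero => simp
    | succ n => simpa [verschiebung_coeff_succ] using hmem n
  · cases n with
    | zero => simp at hn
    | succ n => exact ⟨n, by simpa [verschiebung_coeff_succ] using hn, rfl⟩

theorem coeff_natCast_sub_verschiebung_one_mem_pow (hp2 : p ≠ 2) (hpa : (p : A) ∈ 𝔞) (n : ℕ) :
    ((p : WittVector p A) - verschiebung 1).coeff n ∈ 𝔞 ^ (n + 1) := by
  have hmap : (p : WittVector p A) - verschiebung 1 =
      WittVector.map (Int.castRingHom A) ((p : WittVector p ℤ) - verschiebung 1) := by
    simp [map_verschiebung]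
  obtain ⟨c, hc⟩ := pow_succ_dvd_coeff_of_ghostComponent_succ_eq_zero hp2 _
    (by rw [coeff_zero_natCast_sub_verschiebung_one])
    ghostComponent_succ_natCast_sub_verschiebung_one n
  rw [hmap, map_coeff, hc, map_mul, map_pow, map_natCast]
  exact Ideal.mul_mem_right _ _ (Ideal.pow_mem_pow hpa _)

omit hp in
theorem natCast_mem_of_charP_quotient [CharP (A ⧸ 𝔞) p] : (p : A) ∈ 𝔞 := by
  rw [← Ideal.Quotient.eq_zero_iff_mem, map_natCast, CharP.cast_eq_zero]

theorem verschiebung_one_eq_natCast [CharP A p] : verschiebung (1 : WittVector p A) = p := by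
  simpa using verschiebung_frobenius (p := p) (1 : WittVector p A)

theorem verschiebung_one_mem [CharP (A ⧸ 𝔞) p] (h2 : p = 2 → IsUnit (2 : A) ∨ (2 : A) = 0)
    {𝕎 : Subring (WittVector p A)} (hhat : wittHat p 𝔞 ⊆ 𝕎) : verschiebung 1 ∈ 𝕎 := by
  have hpa : (p : A) ∈ 𝔞 := natCast_mem_of_charP_quotient
  have : Nontrivial (A ⧸ 𝔞) := CharP.nontrivial_of_char_ne_one hp.out.ne_one
  obtain rfl | hp2 := eq_or_ne p 2
  · rcases h2 rfl with hunit | hzero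
    · exact absurd (𝔞.eq_top_of_isUnit_mem (by simpa using hpa) hunit)
        (Ideal.Quotient.nontrivial_iff.1 ‹_›)
    · have : Nontrivial A := (Ideal.Quotient.mk_surjective (I := 𝔞)).nontrivial
      have := CharTwo.of_one_ne_zero_of_two_eq_zero one_ne_zero hzero
      rw [verschiebung_one_eq_natCast]
      exact natCast_mem 𝕎 2
  · have hmem := hhat <|
      mem_wittHat_of_coeff_mem_pow (coeff_natCast_sub_verschiebung_one_mem_pow hp2 hpa)
    simpa only [sub_sub_cancel] using sub_mem (natCast_mem 𝕎 p) hmem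

end Adic

theorem special_subring_verschiebung_stable_general
    (p : ℕ) [Fact p.Prime] (A : Type*) [CommRing A] (𝔞 : Ideal A)
    [CharP (A ⧸ 𝔞) p] [PerfectRing (A ⧸ 𝔞) p]
    (h2 : p = 2 → IsUnit (2 : A) ∨ (2 : A) = 0)
    (𝕎 : Subring (WittVector p A))
    (hf : ∀ x ∈ 𝕎, WittVector.frobenius x ∈ 𝕎)
    (hint : (𝕎 : Set (WittVector p A)) ∩ wittIn p 𝔞 = wittHat p 𝔞)
    (hsurj : ∀ y : WittVector p (A ⧸ 𝔞), ∃ x ∈ 𝕎,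
      WittVector.map (Ideal.Quotient.mk 𝔞) x = y) :
    ∀ x ∈ 𝕎, WittVector.verschiebung x ∈ 𝕎 := by
  have hhat : wittHat p 𝔞 ⊆ 𝕎 := hint ▸ Set.inter_subset_left
  intro x hx
  obtain ⟨y, hy, hyx⟩ := hsurj ((frobeniusEquiv p (A ⧸ 𝔞)).symm (map (Ideal.Quotient.mk 𝔞) x))
  have hδ : frobenius y - x ∈ wittHat p 𝔞 := by
    rw [← hint]
    refine ⟨sub_mem (hf y hy) hx, mem_wittIn_iff_map_eq_zero.2 ?_⟩
    rw [map_sub, (frobenius_isPoly p).map, hyx, sub_eq_zero]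
    exact (frobeniusEquiv p (A ⧸ 𝔞)).apply_symm_apply _
  have hvx : verschiebung x = verschiebung 1 * y - verschiebung (frobenius y - x) := by
    rw [map_sub, ← verschiebung_mul_frobenius, one_mul, sub_sub_cancel]
  rw [hvx]
  exact sub_mem (mul_mem (verschiebung_one_mem h2 hhat) hy) (hhat (verschiebung_mem_wittHat hδ))

/-- Under the admissibility assumptions (with the extra condition at
`p = 2` that `2` is invertible in `A` or `2·A = 0`), any subring `𝕎` of `W(A)` which is
Frobenius-stable, satisfies `𝕎 ∩ W(𝔞) = Ŵ(𝔞)`, and surjects onto `W(A/𝔞)`, is also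
stable under the Verschiebung `v`. -/
theorem special_subring_verschiebung_stable
    (p : ℕ) [Fact p.Prime] (A : Type*) [CommRing A] (𝔞 : Ideal A)
    [IsAdicComplete 𝔞 A] [CharP (A ⧸ 𝔞) p] [PerfectRing (A ⧸ 𝔞) p]
    (h2 : p = 2 → IsUnit (2 : A) ∨ (2 : A) = 0)
    (𝕎 : Subring (WittVector p A))
    (hf : ∀ x ∈ 𝕎, WittVector.frobenius x ∈ 𝕎)
    (hint : (𝕎 : Set (WittVector p A)) ∩ wittIn p 𝔞 = wittHat p 𝔞)
    (hsurj : ∀ y : WittVector p (A ⧸ 𝔞), ∃ x ∈ 𝕎,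
      WittVector.map (Ideal.Quotient.mk 𝔞) x = y) :
    ∀ x ∈ 𝕎, WittVector.verschiebung x ∈ 𝕎 :=
  special_subring_verschiebung_stable_general p A 𝔞 h2 𝕎 hf hint hsurj
end

section
/- Let p be a prime and S → T a faithfully flat homomorphism of commutative rings. Then the induced map W(S) → W(T) is injective, and an element y ∈ W(T) lies in the image of W(S) → W(T) if and only if the two ring homomorphisms W(T) → W(T ⊗_S T), induced by t ↦ t ⊗ 1 and t ↦ 1 ⊗ t respectively, agree on y. In other words, the sequence 0 → W(S) → W(T) ⇉ W(T ⊗_S T) is exact. -/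
/-!
Faithfully flat descent identifies `S` with the equalizer of the two maps `T ⇉ T ⊗[S] T`
(`Algebra.IsEffective.of_faithfullyFlat`). Since `W` acts coefficientwise, lying in an
equalizer or in an image is a condition on each Witt coefficient separately, so the exact
sequence passes from rings to Witt vectors.
-/

open scoped TensorProduct

namespace WittVector

variable {p : ℕ} [Fact p.Prime] {R S U : Type*} [CommRing R] [CommRing S] [CommRing U]

theorem eqLocus_map_eq_range_map {f : R →+* S} {g₁ g₂ : S →+* U}
    (h : (g₁.eqLocus g₂ : Set S) = Set.range f) :
    ((map (p := p) g₁).eqLocus (map g₂) : Set (WittVector p S)) = Set.range (map f) := by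
  ext y
  simp only [SetLike.mem_coe, RingHom.mem_eqLocus, Set.mem_range]
  constructor
  · intro hy
    have hcoeff (n : ℕ) : y.coeff n ∈ Set.range f := by
      rw [← h]
      simpa only [map_coeff, SetLike.mem_coe, RingHom.mem_eqLocus] using congrArg (coeff · n) hy
    choose x hx using hcoeff
    exact ⟨mk p x, ext fun n => by rw [map_coeff, coeff_mk, hx]⟩
  · rintro ⟨x, rfl⟩
    ext n
    rw [map_coeff, map_coeff]
    have hfx : f (x.coeff n) ∈ (g₁.eqLocus g₂ : Set S) := h ▸ ⟨_, rfl⟩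
    exact hfx

end WittVector

/-- Let `p` be a prime and `S → T` a faithfully flat homomorphism of
commutative rings.  Then `W(S) → W(T)` is injective, and `y ∈ W(T)` lies in the image
if and only if the two maps `W(T) → W(T ⊗_S T)` induced by `t ↦ t ⊗ 1` and `t ↦ 1 ⊗ t`
agree on `y`; i.e. `0 → W(S) → W(T) ⇉ W(T ⊗_S T)` is exact. -/
theorem witt_exact_of_faithfullyFlat
    (p : ℕ) [Fact p.Prime] (S T : Type*) [CommRing S] [CommRing T] [Algebra S T]
    [Module.FaithfullyFlat S T] :
    Function.Injective (WittVector.map (p := p) (algebraMap S T)) ∧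
    ∀ y : WittVector p T,
      (WittVector.map (Algebra.TensorProduct.includeLeftRingHom : T →+* T ⊗[S] T) y =
        WittVector.map ((Algebra.TensorProduct.includeRight : T →ₐ[S] T ⊗[S] T) :
          T →+* T ⊗[S] T) y ↔
        ∃ x : WittVector p S, WittVector.map (algebraMap S T) x = y) := by
  refine ⟨WittVector.map_injective _ (FaithfulSMul.algebraMap_injective S T), fun y => ?_⟩
  have hdescent := (Algebra.IsEffective.of_faithfullyFlat S T).eqLocus_includeLeft_includeRight
  exact Set.ext_iff.mp (WittVector.eqLocus_map_eq_range_map (p := p) hdescent) y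
end

section
/- Let p be a prime, K an algebraically closed field (of arbitrary characteristic), and n ≥ 1. Then the composite map W(K) → W(K) → W_n(K), given by the Frobenius f of W(K) followed by truncation to the first n components, is surjective. In particular the truncated Frobenius W_{n+1}(K) → W_n(K) is surjective on points of algebraically closed fields. -/
/-!
Truncation `W(K) → Wₙ(K)` is surjective, so it suffices that Frobenius on `W(K)` is. In
characteristic `p` this is the bijectivity of Frobenius on Witt vectors of a perfect ring. Otherwise
`p` is invertible in `K`, the ghost map identifies `W(K)` with `ℕ → K`, and Frobenius becomes the
left shift of ghost components, which is surjective.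
-/

namespace WittVector

variable (p : ℕ) [Fact p.Prime]

theorem frobenius_surjective_of_invertible (R : Type*) [CommRing R] [Invertible (p : R)] :
    Function.Surjective (frobenius : WittVector p R → WittVector p R) := by
  intro y
  let g := ghostEquiv p R
  refine ⟨g.symm fun m => g y (m - 1), g.injective <| funext fun m => ?_⟩
  exact (ghostComponent_frobenius m _).trans (congrFun (g.apply_symm_apply _) (m + 1))

theorem frobenius_surjective_of_perfectField (K : Type*) [Field K] [PerfectField K] :
    Function.Surjective (frobenius : WittVector p K → WittVector p K) := by
  by_cases hp : (p : K) = 0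
  · have : CharP K p := (CharP.charP_iff_prime_eq_zero Fact.out).mpr hp
    exact (frobenius_bijective p K).surjective
  · have : Invertible (p : K) := invertibleOfNonzero hp
    exact frobenius_surjective_of_invertible p K

end WittVector

theorem truncate_frobenius_surjective_general
    (p : ℕ) [Fact p.Prime] (K : Type*) [Field K] [IsAlgClosed K]
    (n : ℕ) :
    Function.Surjective
      (fun x : WittVector p K =>
        WittVector.truncate n (WittVector.frobenius x)) :=
  (WittVector.truncate_surjective p n K).comp (WittVector.frobenius_surjective_of_perfectField p K)

/-- Let `p` be a prime, `K` an algebraically closed field, and `n ≥ 1`.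
Then the composite `W(K) → W(K) → Wₙ(K)`, Frobenius followed by truncation to the first
`n` components, is surjective.  (In particular the truncated Frobenius
`W_{n+1}(K) → Wₙ(K)` is surjective on points of algebraically closed fields.) -/
theorem truncate_frobenius_surjective
    (p : ℕ) [Fact p.Prime] (K : Type*) [Field K] [IsAlgClosed K]
    (n : ℕ) (hn : 1 ≤ n) :
    Function.Surjective
      (fun x : WittVector p K =>
        WittVector.truncate n (WittVector.frobenius x)) :=
  truncate_frobenius_surjective_general p K n
end

section
/- Let p be a prime, A a commutative ring and 𝔞 ⊆ A a nilpotent ideal with p·1 ∈ 𝔞. Then the Frobenius f of W(A) is elementwise nilpotent on W(𝔞): for every Witt vector x ∈ W(A) all of whose components lie in 𝔞, there exists N such that f^N(x) = 0. -/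
/-!
Write `φ` for the Frobenius of `W(A)`. Its `n`-th component is `xₙ ^ p + p · Pₙ(x)`, where the
polynomial `Pₙ` has no constant term. So if all components of `x` lie in an ideal `I ⊆ 𝔞` and
`p ∈ 𝔞`, those of `φ x` lie in `𝔞 · I`. Iterating, the components of `φ^[m] x` lie in
`𝔞 ^ (m + 1)`, which is zero once `m + 1 ≥ N`.
-/

open MvPolynomial

namespace WittVector

variable {p : ℕ} {A : Type*} [CommRing A]

theorem aeval_frobeniusPolyAux_mem {J : Ideal A} {g : ℕ → A} (hg : ∀ i, g i ∈ J) (n : ℕ) :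
    aeval g (frobeniusPolyAux p n) ∈ J := by
  induction n using Nat.strong_induction_on with
  | _ n ih =>
    rw [frobeniusPolyAux_eq]
    simp only [map_sub, map_sum, map_mul, map_pow, aeval_X, aeval_C]
    refine J.sub_mem (hg _) (J.sum_mem fun i hi => J.sum_mem fun j _ => ?_)
    exact J.mul_mem_right _ <| J.mul_mem_left _ <|
      J.pow_mem_of_mem (ih i (Finset.mem_range.mp hi)) _ j.succ_pos

theorem frobenius_coeff_mem_mul [Fact p.Prime] {𝔞 I : Ideal A} (hI : I ≤ 𝔞) (hp : (p : A) ∈ 𝔞)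
    {x : WittVector p A} (hx : ∀ n, x.coeff n ∈ I) (n : ℕ) :
    (frobenius x).coeff n ∈ 𝔞 * I := by
  rw [coeff_frobenius, frobeniusPoly]
  simp only [map_add, map_mul, map_pow, aeval_X, map_natCast]
  refine Ideal.add_mem _ ?_ (Ideal.mul_mem_mul hp (aeval_frobeniusPolyAux_mem hx n))
  rw [← pow_sub_mul_pow _ (Fact.out : p.Prime).two_le, sq]
  exact Ideal.mul_mem_left _ _ (Ideal.mul_mem_mul (hI (hx n)) (hx n))

theorem iterate_frobenius_coeff_mem_pow [Fact p.Prime] {𝔞 : Ideal A} (hp : (p : A) ∈ 𝔞)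
    {x : WittVector p A} (hx : ∀ n, x.coeff n ∈ 𝔞) (m n : ℕ) :
    ((⇑(frobenius (p := p) (R := A)))^[m] x).coeff n ∈ 𝔞 ^ (m + 1) := by
  induction m generalizing n with
  | zero => simpa using hx n
  | succ m ih =>
    rw [Function.iterate_succ_apply', pow_succ' 𝔞 (m + 1)]
    exact frobenius_coeff_mem_mul (Ideal.pow_le_self m.succ_ne_zero) hp ih n

end WittVector

/-- Let `p` be a prime, `A` a commutative ring and `𝔞 ⊆ A` a nilpotent
ideal with `p·1 ∈ 𝔞`.  Then the Frobenius of `W(A)` is elementwise nilpotent on `W(𝔞)`: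
for every Witt vector all of whose components lie in `𝔞` some Frobenius iterate kills it. -/
theorem frobenius_elementwise_nilpotent
    (p : ℕ) [Fact p.Prime] (A : Type*) [CommRing A] (𝔞 : Ideal A)
    (N : ℕ) (hN : 𝔞 ^ N = ⊥) (hp : (p : A) ∈ 𝔞) :
    ∀ x : WittVector p A, (∀ n, x.coeff n ∈ 𝔞) →
      ∃ m : ℕ, (⇑(WittVector.frobenius (p := p) (R := A)))^[m] x = 0 := by
  intro x hx
  refine ⟨N, WittVector.ext fun n => ?_⟩
  have hbot : 𝔞 ^ (N + 1) ≤ ⊥ := hN ▸ Ideal.pow_le_pow_right N.le_succ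
  simpa using hbot (WittVector.iterate_frobenius_coeff_mem_pow hp hx N n)
end

section
/- Let p be a prime, A a commutative ring and 𝔞 ⊆ A a nilpotent ideal with p·1 ∈ 𝔞. Let M be a module over W(A) such that every element of M is a finite sum Σ wᵢ·mᵢ with wᵢ ∈ W(𝔞) and mᵢ ∈ M (i.e. M = W(𝔞)·M), and let φ : M → M be an additive map that is Frobenius-semilinear: φ(w·m) = f(w)·φ(m) for all w ∈ W(A), m ∈ M. Then id − φ : M → M is bijective. -/
/-!
Frobenius raises the `𝔞`-adic level of Witt vector components: `frobeniusPoly p n` is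
`X n ^ p + p * frobeniusPolyAux p n`, where the auxiliary polynomial has no constant term, so
with `p ∈ 𝔞` components in `𝔞 ^ (j + 1)` go to components in `𝔞 ^ (j + 2)`. Hence `f^N` kills
`W(𝔞)`, and by semilinearity `φ^N` kills `W(𝔞)·M = M`. A nilpotent `φ` makes `id - φ` invertible,
with inverse `∑_{k<N} φ^k`.
-/

open MvPolynomial

theorem MvPolynomial.aeval_mem_of_constantCoeff_eq_zero {σ R S : Type*} [CommSemiring R]
    [CommRing S] [Algebra R S] {I : Ideal S} {P : MvPolynomial σ R}
    (hP : constantCoeff P = 0) {x : σ → S} (hx : ∀ i, x i ∈ I) : aeval x P ∈ I := by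
  have hx0 : (fun i => Ideal.Quotient.mk I (x i)) = (0 : σ → S ⧸ I) :=
    _root_.funext fun i => Ideal.Quotient.eq_zero_iff_mem.2 (hx i)
  rw [← Ideal.Quotient.eq_zero_iff_mem, map_aeval, hx0, eval₂Hom_zero_apply, hP, map_zero]

namespace WittVector

variable {p : ℕ} {A : Type*} [CommRing A] {I : Ideal A}

theorem constantCoeff_frobeniusPolyAux (n : ℕ) :
    MvPolynomial.constantCoeff (frobeniusPolyAux p n) = 0 := by
  induction n using Nat.strong_induction_on with
  | _ n ih =>
    rw [frobeniusPolyAux_eq, map_sub, constantCoeff_X, zero_sub, map_sum, neg_eq_zero]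
    refine Finset.sum_eq_zero fun i hi =>
      (map_sum _ _ _).trans <| Finset.sum_eq_zero fun j _ => ?_
    simp only [map_mul, map_pow, ih i (Finset.mem_range.1 hi), zero_pow j.succ_ne_zero,
      mul_zero, zero_mul]

variable [Fact p.Prime]

theorem coeff_frobenius_mem_pow_succ_succ (hp : (p : A) ∈ I) {j : ℕ} {w : WittVector p A}
    (hw : ∀ n, w.coeff n ∈ I ^ (j + 1)) (n : ℕ) :
    (frobenius w).coeff n ∈ I ^ (j + 2) := by
  have hpow : j + 2 ≤ (j + 1) * p := by
    nlinarith [(Fact.out : p.Prime).two_le]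
  rw [coeff_frobenius, frobeniusPoly, map_add, map_pow, aeval_X, map_mul, aeval_C]
  refine Ideal.add_mem _ (Ideal.pow_le_pow_right hpow ?_) ?_
  · rw [pow_mul]
    exact Ideal.pow_mem_pow (hw n) p
  · rw [eq_intCast, Int.cast_natCast, pow_succ']
    exact Ideal.mul_mem_mul hp
      (aeval_mem_of_constantCoeff_eq_zero (constantCoeff_frobeniusPolyAux n) hw)

theorem coeff_frobenius_iterate_mem_pow (hp : (p : A) ∈ I) {w : WittVector p A}
    (hw : ∀ n, w.coeff n ∈ I) (k n : ℕ) :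
    ((frobenius (p := p))^[k] w).coeff n ∈ I ^ (k + 1) := by
  induction k generalizing n with
  | zero => simpa using hw n
  | succ k ih =>
    rw [Function.iterate_succ_apply']
    exact coeff_frobenius_mem_pow_succ_succ hp ih n

theorem frobenius_iterate_eq_zero {N : ℕ} (hN : I ^ N = ⊥) (hp : (p : A) ∈ I)
    {w : WittVector p A} (hw : ∀ n, w.coeff n ∈ I) : (frobenius (p := p))^[N] w = 0 := by
  ext n
  have hmem := Ideal.pow_le_pow_right N.le_succ (coeff_frobenius_iterate_mem_pow hp hw N n)
  simpa [hN] using hmem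

end WittVector

theorem Function.iterate_map_smul_of_map_smul {R M : Type*} [SMul R M] {f : M → M}
    {σ : R → R} (hf : ∀ (r : R) (m : M), f (r • m) = σ r • f m) (k : ℕ) (r : R) (m : M) :
    f^[k] (r • m) = σ^[k] r • f^[k] m := by
  induction k with
  | zero => rfl
  | succ k ih => simp only [Function.iterate_succ_apply', ih, hf]

/-- Let `p` be a prime, `A` a commutative ring and `𝔞 ⊆ A` a nilpotent
ideal with `p·1 ∈ 𝔞`.  Let `M` be a `W(A)`-module with `M = W(𝔞)·M` (every element is a
finite sum `Σ wᵢ·mᵢ` with all components of each `wᵢ` in `𝔞`), and let `φ : M → M` be an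
additive Frobenius-semilinear map.  Then `id − φ` is bijective. -/
theorem sub_semilinear_bijective
    (p : ℕ) [Fact p.Prime] (A : Type*) [CommRing A] (𝔞 : Ideal A)
    (N : ℕ) (hN : 𝔞 ^ N = ⊥) (hp : (p : A) ∈ 𝔞)
    (M : Type*) [AddCommGroup M] [Module (WittVector p A) M]
    (hM : ∀ m : M, ∃ (n : ℕ) (w : Fin n → WittVector p A) (x : Fin n → M),
      (∀ i j, (w i).coeff j ∈ 𝔞) ∧ m = ∑ i, w i • x i)
    (φ : M →+ M)
    (hφ : ∀ (w : WittVector p A) (m : M), φ (w • m) = WittVector.frobenius w • φ m) :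
    Function.Bijective (fun m : M => m - φ m) := by
  have hφ_nilpotent : IsNilpotent φ.toIntLinearMap := by
    refine ⟨N, LinearMap.ext fun m => ?_⟩
    obtain ⟨n, w, x, hw, rfl⟩ := hM m
    refine (map_sum _ _ _).trans (Finset.sum_eq_zero fun i _ => ?_)
    rw [Module.End.coe_pow, AddMonoidHom.coe_toIntLinearMap,
      Function.iterate_map_smul_of_map_smul hφ,
      WittVector.frobenius_iterate_eq_zero hN hp (hw i), zero_smul]
  exact (Module.End.isUnit_iff _).1 hφ_nilpotent.isUnit_one_sub
end

section
/- Let p be a prime, R a commutative ring, and write W = W(R), with Frobenius f, Verschiebung v, and I_R = ker(w₀ : W(R) → R). Let P, P' be W(R)-modules with submodules Q ⊆ P, Q' ⊆ P' satisfying I_R·P ⊆ Q and I_R·P' ⊆ Q'. Let F : P → P and F₁ : Q → P be additive maps with F(w·y) = f(w)·F(y) for y ∈ P, F₁(w·x) = f(w)·F₁(x) for x ∈ Q, and F₁(v(w)·y) = w·F(y) for all w ∈ W(R), y ∈ P; let F', F₁' be maps on P', Q' satisfying the analogous identities. Let α : P × P' → W(R) be W(R)-bilinear and suppose v(α(F₁x,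 F₁'x')) = α(x, x') for all x ∈ Q, x' ∈ Q'. Then for all x ∈ Q, x' ∈ Q', y ∈ P, y' ∈ P': (a) α(F₁x, F'y') = f(α(x, y')); (b) α(Fy, F₁'x') = f(α(y, x')); (c) α(Fy, F'y') = p·f(α(y, y')). -/
/-!
Write `v 1 • y'` for `y' ∈ P'`; it lies in `Q'` since `v 1 ∈ I_R`, and the display axiom gives
`F₁' (v 1 • y') = F' y'`. Feeding this into the hypothesis on `α` and using the projection
formula `v 1 * a = v (f a)` turns `α(x, v 1 • y') = v 1 * α(x, y')` into
`v (α(F₁ x, F' y')) = v (f (α(x, y')))`, and `v` is injective: this is (a). Identity (b) is (a)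
for the transposed form, and (c) is (b) at `x' = v 1 • y'`, using `f (v a) = p * a`.
-/

open WittVector

theorem WittVector.verschiebung_one_mul {p : ℕ} [Fact p.Prime] {R : Type*} [CommRing R]
    (x : WittVector p R) : verschiebung 1 * x = verschiebung (frobenius x) := by
  rw [← verschiebung_mul_frobenius, one_mul]

section BilinearForm

variable {p : ℕ} [Fact p.Prime] {R : Type*} [CommRing R]
  {P P' : Type*} [AddCommGroup P] [AddCommGroup P']
  [Module (WittVector p R) P] [Module (WittVector p R) P']
  {Q : Submodule (WittVector p R) P} {Q' : Submodule (WittVector p R) P'}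

theorem verschiebung_one_smul_mem
    (hQ : ∀ (w : WittVector p R) (y : P), w.coeff 0 = 0 → w • y ∈ Q) (y : P) :
    verschiebung (1 : WittVector p R) • y ∈ Q :=
  hQ _ _ (verschiebung_coeff_zero 1)

theorem bilinear_apply_F₁_F_eq_frobenius
    (hQ' : ∀ (w : WittVector p R) (y' : P'), w.coeff 0 = 0 → w • y' ∈ Q')
    (F₁ : Q → P) (F' : P' → P') (F₁' : Q' → P')
    (hFF₁' : ∀ (w : WittVector p R) (y' : P') (h : verschiebung w • y' ∈ Q'),
      F₁' ⟨verschiebung w • y', h⟩ = w • F' y')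
    (α : P →ₗ[WittVector p R] P' →ₗ[WittVector p R] WittVector p R)
    (hα : ∀ (x : Q) (x' : Q'), verschiebung (α (F₁ x) (F₁' x')) = α (x : P) (x' : P'))
    (x : Q) (y' : P') :
    α (F₁ x) (F' y') = frobenius (α (x : P) y') := by
  have hy' := verschiebung_one_smul_mem hQ' y'
  apply verschiebung_injective p R
  calc verschiebung (α (F₁ x) (F' y'))
      = verschiebung (α (F₁ x) (F₁' ⟨verschiebung 1 • y', hy'⟩)) := by
        rw [hFF₁' 1 y' hy', one_smul]
    _ = verschiebung 1 * α x y' := by rw [hα, map_smul, smul_eq_mul]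
    _ = verschiebung (frobenius (α x y')) := verschiebung_one_mul _

end BilinearForm

theorem bilinear_form_identities_general
    (p : ℕ) [Fact p.Prime] (R : Type*) [CommRing R]
    (P P' : Type*) [AddCommGroup P] [AddCommGroup P']
    [Module (WittVector p R) P] [Module (WittVector p R) P']
    (Q : Submodule (WittVector p R) P) (Q' : Submodule (WittVector p R) P')
    (hQ : ∀ (w : WittVector p R) (y : P), w.coeff 0 = 0 → w • y ∈ Q)
    (hQ' : ∀ (w : WittVector p R) (y' : P'), w.coeff 0 = 0 → w • y' ∈ Q')
    (F : P →+ P) (F₁ : Q →+ P)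
    (hFF₁ : ∀ (w : WittVector p R) (y : P) (h : WittVector.verschiebung w • y ∈ Q),
      F₁ ⟨WittVector.verschiebung w • y, h⟩ = w • F y)
    (F' : P' →+ P') (F₁' : Q' →+ P')
    (hFF₁' : ∀ (w : WittVector p R) (y' : P')
        (h : WittVector.verschiebung w • y' ∈ Q'),
      F₁' ⟨WittVector.verschiebung w • y', h⟩ = w • F' y')
    (α : P →ₗ[WittVector p R] P' →ₗ[WittVector p R] WittVector p R)
    (hα : ∀ (x : Q) (x' : Q'),
      WittVector.verschiebung (α (F₁ x) (F₁' x')) = α (x : P) (x' : P')) :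
    (∀ (x : Q) (y' : P'),
      α (F₁ x) (F' y') = WittVector.frobenius (α (x : P) y')) ∧
    (∀ (y : P) (x' : Q'),
      α (F y) (F₁' x') = WittVector.frobenius (α y (x' : P'))) ∧
    (∀ (y : P) (y' : P'),
      α (F y) (F' y') = (p : WittVector p R) * WittVector.frobenius (α y y')) := by
  have hb : ∀ (y : P) (x' : Q'), α (F y) (F₁' x') = frobenius (α y (x' : P')) :=
    fun y x' => bilinear_apply_F₁_F_eq_frobenius hQ F₁' F F₁ hFF₁ α.flip
      (fun x' x => hα x x') x' y
  refine ⟨bilinear_apply_F₁_F_eq_frobenius hQ' F₁ F' F₁' hFF₁' α hα, hb, fun y y' => ?_⟩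
  have hy' := verschiebung_one_smul_mem hQ' y'
  calc α (F y) (F' y') = α (F y) (F₁' ⟨verschiebung 1 • y', hy'⟩) := by
        rw [hFF₁' 1 y' hy', one_smul]
    _ = frobenius (verschiebung 1 * α y y') := by rw [hb, map_smul, smul_eq_mul]
    _ = p * frobenius (α y y') := by
        rw [verschiebung_one_mul, frobenius_verschiebung, mul_comm]

/-- Bilinear-form identities for (Dieudonné-)display-like data.
Given `W(R)`-modules `P, P'` with submodules `Q ⊇ I_R·P`, `Q' ⊇ I_R·P'`, semilinear
operators `F, F₁` and `F', F₁'` satisfying the display axioms, and a `W(R)`-bilinear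
form `α : P × P' → W(R)` with `v(α(F₁x, F₁'x')) = α(x, x')` for `x ∈ Q`, `x' ∈ Q'`,
we have: (a) `α(F₁x, F'y') = f(α(x, y'))`; (b) `α(Fy, F₁'x') = f(α(y, x'))`;
(c) `α(Fy, F'y') = p·f(α(y, y'))`. -/
theorem bilinear_form_identities
    (p : ℕ) [Fact p.Prime] (R : Type*) [CommRing R]
    (P P' : Type*) [AddCommGroup P] [AddCommGroup P']
    [Module (WittVector p R) P] [Module (WittVector p R) P']
    (Q : Submodule (WittVector p R) P) (Q' : Submodule (WittVector p R) P')
    (hQ : ∀ (w : WittVector p R) (y : P), w.coeff 0 = 0 → w • y ∈ Q)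
    (hQ' : ∀ (w : WittVector p R) (y' : P'), w.coeff 0 = 0 → w • y' ∈ Q')
    (F : P →+ P) (F₁ : Q →+ P)
    (hF : ∀ (w : WittVector p R) (y : P), F (w • y) = WittVector.frobenius w • F y)
    (hF₁ : ∀ (w : WittVector p R) (x : Q), F₁ (w • x) = WittVector.frobenius w • F₁ x)
    (hFF₁ : ∀ (w : WittVector p R) (y : P) (h : WittVector.verschiebung w • y ∈ Q),
      F₁ ⟨WittVector.verschiebung w • y, h⟩ = w • F y)
    (F' : P' →+ P') (F₁' : Q' →+ P')
    (hF' : ∀ (w : WittVector p R) (y' : P'),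
      F' (w • y') = WittVector.frobenius w • F' y')
    (hF₁' : ∀ (w : WittVector p R) (x' : Q'),
      F₁' (w • x') = WittVector.frobenius w • F₁' x')
    (hFF₁' : ∀ (w : WittVector p R) (y' : P')
        (h : WittVector.verschiebung w • y' ∈ Q'),
      F₁' ⟨WittVector.verschiebung w • y', h⟩ = w • F' y')
    (α : P →ₗ[WittVector p R] P' →ₗ[WittVector p R] WittVector p R)
    (hα : ∀ (x : Q) (x' : Q'),
      WittVector.verschiebung (α (F₁ x) (F₁' x')) = α (x : P) (x' : P')) :
    (∀ (x : Q) (y' : P'),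
      α (F₁ x) (F' y') = WittVector.frobenius (α (x : P) y')) ∧
    (∀ (y : P) (x' : Q'),
      α (F y) (F₁' x') = WittVector.frobenius (α y (x' : P'))) ∧
    (∀ (y : P) (y' : P'),
      α (F y) (F' y') = (p : WittVector p R) * WittVector.frobenius (α y y')) :=
  bilinear_form_identities_general p R P P' Q Q' hQ hQ' F F₁ hFF₁ F' F₁' hFF₁' α hα
end

section
/- Let p be a prime, k an algebraically closed field of characteristic p, and P a finite free module over W(k). Let Φ : P → P be an additive bijection that is Frobenius-semilinear: Φ(c·x) = f(c)·Φ(x) for all c ∈ W(k), x ∈ P. Then Φ − id : P → P is surjective, and the fixed-point set ker(Φ − id) = { x ∈ P : Φ(x) = x } generates P as a W(k)-module. -/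
/-!
Over `k`, the iterates `φⁱ v` of a nonzero vector satisfy a linear recurrence, and a fixed
vector in their span amounts to a nonzero root of an additive polynomial `∑ cⱼ X^(pʲ) - X`,
which exists because `k` is algebraically closed. Solving `t ^ p - t = a` shows that `φ - 1`
maps the span `S` of the fixed vectors onto itself; a fixed vector of the map induced on `V ⧸ S`
then lifts to a fixed vector outside `S`, so `S = V`.

Over `W(k)`, reducing coordinates modulo `p` turns `Φ` into a bijective Frobenius-semilinear
map on `k^n`. Hence `Φ - 1` is onto modulo `p`, so onto by `p`-adic completeness, and fixed
vectors modulo `p` lift to fixed vectors of `Φ`, which generate `P` by Nakayama's lemma.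
-/

open Submodule

instance {R : Type*} [CommSemiring R] (p : ℕ) [ExpChar R p] [PerfectRing R p] :
    RingHomSurjective (frobenius R p) :=
  ⟨surjective_frobenius R p⟩

section IsAlgClosed

open Polynomial

variable {k : Type*} [Field k] [IsAlgClosed k]

theorem exists_pow_sub_self_eq {n : ℕ} (hn : 2 ≤ n) (a : k) : ∃ t : k, t ^ n - t = a := by
  have hlt : (X + C a).degree < (X ^ n : k[X]).degree := by
    rw [degree_X_pow, degree_X_add_C]
    exact_mod_cast hn
  obtain ⟨t, ht⟩ := IsAlgClosed.exists_root (X ^ n - (X + C a)) <| by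
    rw [degree_sub_eq_left_of_degree_lt hlt, degree_X_pow]
    exact_mod_cast (by omega : n ≠ 0)
  exact ⟨t, by simpa [sub_sub, sub_eq_zero, sub_eq_iff_eq_add'] using ht⟩

theorem Polynomial.exists_isRoot_ne_zero {f : k[X]} (h0 : f.coeff 0 = 0) (h1 : f.coeff 1 ≠ 0)
    {n : ℕ} (hn : 2 ≤ n) (hfn : f.coeff n ≠ 0) : ∃ x ≠ 0, f.IsRoot x := by
  obtain ⟨x, hx⟩ := IsAlgClosed.exists_root f.divX fun h => hfn <| by
    simpa [coeff_divX, Nat.sub_add_cancel (by omega : 1 ≤ n), coeff_C,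
      if_neg (by omega : n - 1 ≠ 0)]
      using congrArg (coeff · (n - 1)) (eq_C_of_degree_eq_zero h)
  refine ⟨x, fun hx0 => h1 ?_, ?_⟩
  · rwa [hx0, IsRoot, ← coeff_zero_eq_eval_zero, coeff_divX] at hx
  · rw [IsRoot, ← X_mul_divX_add f, h0]
    simp [hx.eq_zero]

theorem exists_ne_zero_sum_mul_pow_eq {ι : Type*} (s : Finset ι) (c : ι → k) (d : ι → ℕ)
    (hd : Set.InjOn d s) (hd2 : ∀ j ∈ s, 2 ≤ d j) (hc : ∃ j ∈ s, c j ≠ 0) :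
    ∃ x ≠ 0, ∑ j ∈ s, c j * x ^ d j = x := by
  classical
  obtain ⟨j, hj, hcj⟩ := hc
  set f : k[X] := ∑ j ∈ s, C (c j) * X ^ d j - X
  have hcoeff : ∀ n, f.coeff n = (∑ i ∈ s, if n = d i then c i else 0) - if n = 1 then 1 else 0 :=
    fun n => by simp only [f, coeff_sub, finsetSum_coeff, coeff_C_mul_X_pow, coeff_X, eq_comm]
  have hlow : ∀ n < 2, ∑ i ∈ s, (if n = d i then c i else 0) = 0 := fun n hn =>
    Finset.sum_eq_zero fun i hi => if_neg (by have := hd2 i hi; omega)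
  have hdj : f.coeff (d j) = c j := by
    rw [hcoeff, Finset.sum_eq_single_of_mem j hj fun i hi hij =>
      if_neg fun h => hij (hd hi hj h.symm), if_pos rfl,
      if_neg (by have := hd2 j hj; omega), sub_zero]
  obtain ⟨x, hx0, hx⟩ := exists_isRoot_ne_zero (f := f) (by simp [hcoeff, hlow])
    (by simp [hcoeff, hlow]) (hd2 j hj) (hdj ▸ hcj)
  exact ⟨x, hx0, by simpa [f, IsRoot, eval_finsetSum, sub_eq_zero] using hx⟩

end IsAlgClosed

theorem exists_linearIndepOn_range_and_mem_span {K V : Type*} [DivisionRing K] [AddCommGroup V]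
    [Module K V] [FiniteDimensional K V] (g : ℕ → V) :
    ∃ n, LinearIndepOn K g (Finset.range n : Set ℕ) ∧
      g n ∈ span K (g '' (Finset.range n : Set ℕ)) := by
  classical
  have hex : ∃ m, ¬ LinearIndepOn K g (Finset.range m : Set ℕ) := by
    refine ⟨Module.finrank K V + 1, fun h => ?_⟩
    simpa using LinearIndependent.fintype_card_le_finrank h
  obtain ⟨n, hn⟩ : ∃ n, Nat.find hex = n + 1 :=
    Nat.exists_eq_add_one.mpr <| Nat.pos_of_ne_zero fun h0 => Nat.find_spec hex <| by
      rw [h0, Finset.range_zero, Finset.coe_empty]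
      exact linearIndepOn_empty K g
  have hind : LinearIndepOn K g (Finset.range n : Set ℕ) :=
    not_not.mp fun h => absurd (Nat.find_min' hex h) (by omega)
  have hdep := Nat.find_spec hex
  rw [hn, Finset.range_add_one, Finset.coe_insert, linearIndepOn_insert (by simp)] at hdep
  exact ⟨n, hind, not_not.mp fun h => hdep ⟨hind, h⟩⟩

theorem map_span_setOf_apply_eq_self {R M : Type*} [Semiring R] [AddCommMonoid M] [Module R M]
    {σ : R →+* R} [RingHomSurjective σ] (f : M →ₛₗ[σ] M) :
    (span R {x | f x = x}).map f = span R {x | f x = x} := by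
  rw [map_span]
  exact congrArg _ (Set.EqOn.image_eq_self fun x hx => hx)

section Frobenius

variable {p : ℕ} [Fact p.Prime] {k : Type*} [Field k] [CharP k p]
  {V : Type*} [AddCommGroup V] [Module k V] (φ : V →ₛₗ[frobenius k p] V)

theorem exists_fixed_ne_zero_of_linearRecurrence (g : ℕ → V) (hg : ∀ i, φ (g i) = g (i + 1))
    (m : ℕ) (hind : LinearIndepOn k g (Finset.range (m + 1) : Set ℕ)) (A : ℕ → k)
    (hA : ∑ i ∈ Finset.range (m + 1), A i • g i = g (m + 1)) (s : k) (hs0 : s ≠ 0)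
    (hs : ∑ j ∈ Finset.range (m + 1), (A j * s) ^ p ^ (m + 1 - j) = s) :
    ∃ w ≠ 0, φ w = w := by
  -- `∑ e i • g i` is fixed iff `e 0 = A 0 * s`, `e (i + 1) = e i ^ p + A (i + 1) * s` and
  -- `e m ^ p = s`; the closed form below solves the recursion, and `hs` is the last condition.
  set e : ℕ → k := fun i => ∑ j ∈ Finset.range (i + 1), (A j * s) ^ p ^ (i - j)
  have he_pow : ∀ i, e i ^ p = ∑ j ∈ Finset.range (i + 1), (A j * s) ^ p ^ (i + 1 - j) := by
    intro i
    rw [sum_pow_char]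
    refine Finset.sum_congr rfl fun j hj => ?_
    rw [← pow_mul, ← pow_succ, Nat.sub_add_comm (Finset.mem_range_succ_iff.mp hj)]
  have he_zero : e 0 = A 0 * s := by simp [e]
  have he_succ : ∀ i, e (i + 1) = e i ^ p + A (i + 1) * s := fun i => by
    rw [he_pow]
    simp [e, Finset.sum_range_succ _ (i + 1)]
  have he_last : e m ^ p = s := (he_pow m).trans hs
  refine ⟨∑ i ∈ Finset.range (m + 1), e i • g i, fun h0 => hs0 ?_, ?_⟩
  · rw [← he_last, linearIndepOn_finset_iff.mp hind e h0 m (by simp),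
      zero_pow (Fact.out : p.Prime).ne_zero]
  calc φ (∑ i ∈ Finset.range (m + 1), e i • g i)
      = ∑ i ∈ Finset.range m, e i ^ p • g (i + 1) + s • g (m + 1) := by
        rw [map_sum, Finset.sum_range_succ]
        simp only [LinearMap.map_smulₛₗ, hg, frobenius_def, he_last]
    _ = ∑ i ∈ Finset.range m, e i ^ p • g (i + 1) +
          (∑ i ∈ Finset.range m, (A (i + 1) * s) • g (i + 1) + (A 0 * s) • g 0) := by
        rw [← hA, Finset.smul_sum, Finset.sum_range_succ']
        simp only [smul_smul, mul_comm s]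
    _ = ∑ i ∈ Finset.range (m + 1), e i • g i := by
        rw [Finset.sum_range_succ' _ m, ← add_assoc, ← Finset.sum_add_distrib, he_zero]
        simp only [he_succ, add_smul]

variable [IsAlgClosed k]

theorem exists_fixed_ne_zero [FiniteDimensional k V] [Nontrivial V] (hφ : Function.Injective φ) :
    ∃ w ≠ 0, φ w = w := by
  have hp : 2 ≤ p := (Fact.out : p.Prime).two_le
  obtain ⟨v, hv⟩ := exists_ne (0 : V)
  set g : ℕ → V := fun i => φ^[i] v
  have hg : ∀ i, φ (g i) = g (i + 1) := fun i => (Function.iterate_succ_apply' φ i v).symm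
  obtain ⟨n, hind, hspan⟩ := exists_linearIndepOn_range_and_mem_span (K := k) g
  obtain ⟨A, hA⟩ := (mem_span_image_finset_iff_exists_fun' k).mp hspan
  have hgn : g n ≠ 0 := by
    rw [← Function.iterate_fixed (map_zero φ) n]
    exact (hφ.iterate n).ne hv
  obtain ⟨j, hj, hAj⟩ : ∃ j ∈ Finset.range n, A j ≠ 0 := by
    by_contra! h
    exact hgn (hA ▸ Finset.sum_eq_zero fun i hi => by rw [h i hi, zero_smul])
  obtain ⟨m, rfl⟩ : ∃ m, n = m + 1 := Nat.exists_eq_add_one.mpr (by simp at hj; omega)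
  obtain ⟨s, hs0, hs⟩ := exists_ne_zero_sum_mul_pow_eq (Finset.range (m + 1))
    (fun j => A j ^ p ^ (m + 1 - j)) (fun j => p ^ (m + 1 - j))
    (fun a ha b hb hab => by
      have := Nat.pow_right_injective hp hab
      simp only [Finset.coe_range, Set.mem_Iio] at ha hb
      omega)
    (fun i hi => hp.trans (Nat.le_self_pow (by simp at hi; omega) p))
    ⟨j, hj, pow_ne_zero _ hAj⟩
  exact exists_fixed_ne_zero_of_linearRecurrence φ g hg m hind A hA s hs0
    (by simpa only [mul_pow] using hs)

theorem exists_mem_span_fixed_sub_eq {s : V} (hs : s ∈ span k {x | φ x = x}) :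
    ∃ u ∈ span k {x | φ x = x}, φ u - u = s := by
  -- `φ - 1` is not linear, so the induction has to carry all multiples of `s`.
  suffices ∀ c : k, ∃ u ∈ span k {x | φ x = x}, φ u - u = c • s by simpa using this 1
  induction hs using Submodule.span_induction with
  | mem x hx =>
    intro c
    obtain ⟨t, ht⟩ := exists_pow_sub_self_eq (Fact.out : p.Prime).two_le c
    refine ⟨t • x, smul_mem _ _ (subset_span hx), ?_⟩
    rw [LinearMap.map_smulₛₗ, hx, frobenius_def, ← sub_smul, ht]
  | zero => exact fun c => ⟨0, zero_mem _, by simp⟩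
  | add x y _ _ hx hy =>
    intro c
    obtain ⟨u, hu, hux⟩ := hx c
    obtain ⟨v, hv, hvy⟩ := hy c
    exact ⟨u + v, add_mem hu hv, by rw [map_add, smul_add, ← hux, ← hvy]; abel⟩
  | smul a x _ hx =>
    intro c
    obtain ⟨u, hu, hux⟩ := hx (c * a)
    exact ⟨u, hu, by rw [hux, smul_smul]⟩

theorem span_fixed_eq_top [FiniteDimensional k V] (hφ : Function.Injective φ) :
    span k {x | φ x = x} = ⊤ := by
  set S := span k {x | φ x = x}
  by_contra hS
  have : Nontrivial (V ⧸ S) := Quotient.nontrivial_iff.mpr hS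
  have hSφ : S.map φ = S := map_span_setOf_apply_eq_self φ
  let φS := S.mapQ S φ (map_le_iff_le_comap.mp hSφ.le)
  have hφS : Function.Injective φS := by
    rw [injective_iff_map_eq_zero]
    rintro ⟨x⟩ hx
    rw [Quotient.quot_mk_eq_mk, mapQ_apply, Quotient.mk_eq_zero] at hx
    rw [Quotient.quot_mk_eq_mk, Quotient.mk_eq_zero, ← comap_map_eq_of_injective hφ S, mem_comap,
      hSφ]
    exact hx
  obtain ⟨w, hw0, hw⟩ := exists_fixed_ne_zero φS hφS
  obtain ⟨x, rfl⟩ := S.mkQ_surjective w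
  rw [mkQ_apply, mapQ_apply, Submodule.Quotient.eq] at hw
  obtain ⟨u, hu, hux⟩ := exists_mem_span_fixed_sub_eq φ (neg_mem hw)
  have hfix : φ (x + u) = x + u := by
    rw [map_add, sub_eq_iff_eq_add.mp hux]
    abel
  exact hw0 <| (Quotient.mk_eq_zero S).mpr <| by
    simpa using sub_mem (subset_span hfix : x + u ∈ S) hu

theorem exists_sub_self_eq [FiniteDimensional k V] (hφ : Function.Injective φ) (y : V) :
    ∃ u, φ u - u = y := by
  obtain ⟨u, -, hu⟩ := exists_mem_span_fixed_sub_eq φ (s := y) (by simp [span_fixed_eq_top φ hφ])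
  exact ⟨u, hu⟩

end Frobenius

section Adic

variable {R M ι : Type*} [CommRing R] [AddCommGroup M] [Module R M]

theorem Submodule.mem_ideal_span_singleton_smul_top {a : R} {x : M} :
    x ∈ Ideal.span {a} • (⊤ : Submodule R M) ↔ ∃ y, a • y = x := by
  simp [ideal_span_singleton_smul, mem_smul_pointwise_iff_exists]

theorem Module.Basis.mem_ideal_smul_top_iff [Fintype ι] (b : Module.Basis ι R M) (J : Ideal R)
    (x : M) : x ∈ J • (⊤ : Submodule R M) ↔ ∀ i, b.repr x i ∈ J := by
  refine ⟨fun hx i => ?_, fun h => ?_⟩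
  · refine smul_induction_on hx (fun a ha m _ => ?_) fun x y hx hy => ?_
    · simpa using J.mul_mem_right _ ha
    · simpa using J.add_mem hx hy
  · rw [← b.sum_repr x]
    exact sum_mem fun i _ => smul_mem_smul (h i) mem_top

theorem Module.Basis.smodEq_ideal_smul_top_iff [Fintype ι] (b : Module.Basis ι R M)
    (J : Ideal R) (x y : M) : x ≡ y [SMOD (J • ⊤ : Submodule R M)] ↔
      ∀ i, b.repr x i ≡ b.repr y i [SMOD (J • ⊤ : Submodule R R)] := by
  simp only [SModEq.sub_mem, b.mem_ideal_smul_top_iff, map_sub, Finsupp.sub_apply, smul_eq_mul,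
    Ideal.mul_top]

theorem Module.Basis.isAdicComplete [Finite ι] (b : Module.Basis ι R M) (I : Ideal R)
    [hR : IsAdicComplete I R] : IsAdicComplete I M := by
  have := Fintype.ofFinite ι
  refine @IsAdicComplete.mk _ _ _ _ _ _
    ⟨fun x hx => b.repr.map_eq_zero_iff.mp (Finsupp.ext fun i => ?_)⟩ ⟨fun f hf => ?_⟩
  · refine hR.haus _ fun n => ?_
    simpa using (b.smodEq_ideal_smul_top_iff _ x 0).mp (hx n) i
  · choose L hL using fun i => hR.prec (f := fun n => b.repr (f n) i)
      fun hmn => (b.smodEq_ideal_smul_top_iff _ _ _).mp (hf hmn) i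
    refine ⟨b.equivFun.symm L, fun n => (b.smodEq_ideal_smul_top_iff _ _ _).mpr fun i => ?_⟩
    rw [← b.equivFun_apply (b.equivFun.symm L), LinearEquiv.apply_symm_apply]
    simpa using hL i n

theorem surjective_of_forall_exists_eq_add_natCast_smul (n : ℕ)
    [IsAdicComplete (Ideal.span {(n : R)}) M] (T : M →+ M)
    (hT : ∀ z, ∃ w y, z = T w + (n : R) • y) : Function.Surjective T := by
  -- `T` is only additive: view it as a `ℤ`-linear map, `M` being `n`-adically complete over `ℤ`.
  have : IsAdicComplete (Ideal.span {(n : ℤ)}) M := by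
    rw [← IsAdicComplete.map_algebraMap_iff (S := R)]
    simpa [Ideal.map_span] using ‹IsAdicComplete (Ideal.span {(n : R)}) M›
  refine surjective_of_mkQ_comp_surjective (I := Ideal.span {(n : ℤ)}) (f := T.toIntLinearMap) ?_
  rintro ⟨z⟩
  obtain ⟨w, y, rfl⟩ := hT z
  refine ⟨w, (Submodule.Quotient.eq _).mpr (mem_ideal_span_singleton_smul_top.mpr ⟨-y, ?_⟩)⟩
  simp [Nat.cast_smul_eq_nsmul]

end Adic

section Reduction

variable {R S M V ι : Type*} [CommRing R] [CommRing S] [AddCommGroup M] [Module R M]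
  [AddCommGroup V] [Module S V]

noncomputable def Module.Basis.reduceCoords (b : Module.Basis ι R M) (π : R →+* S) :
    M →ₛₗ[π] ι → S where
  toFun x i := π (b.repr x i)
  map_add' x y := by ext i; simp
  map_smul' c x := by ext i; simp

@[simp]
theorem Module.Basis.reduceCoords_apply (b : Module.Basis ι R M) (π : R →+* S) (x : M) (i : ι) :
    b.reduceCoords π x i = π (b.repr x i) := rfl

theorem Module.Basis.reduceCoords_surjective [Finite ι] (b : Module.Basis ι R M) {π : R →+* S}
    (hπ : Function.Surjective π) : Function.Surjective (b.reduceCoords π) := by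
  have := Fintype.ofFinite ι
  intro v
  refine ⟨b.equivFun.symm fun i => Function.surjInv hπ (v i), funext fun i => ?_⟩
  rw [reduceCoords_apply, ← b.equivFun_apply, LinearEquiv.apply_symm_apply,
    Function.surjInv_eq hπ]

theorem Module.Basis.reduceCoords_eq_zero_iff [Fintype ι] (b : Module.Basis ι R M) (π : R →+* S)
    (x : M) : b.reduceCoords π x = 0 ↔ x ∈ RingHom.ker π • (⊤ : Submodule R M) := by
  simp [b.mem_ideal_smul_top_iff, funext_iff]

theorem exists_semilinearMap_comp_eq {π : R →+* S} {σ : R →+* R} {τ : S →+* S}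
    (hπ : Function.Surjective π) (hτ : τ.comp π = π.comp σ) (ρ : M →ₛₗ[π] V)
    (hρ : Function.Surjective ρ) (Φ : M →ₛₗ[σ] M) (hΦ : ∀ x, ρ x = 0 → ρ (Φ x) = 0) :
    ∃ ψ : V →ₛₗ[τ] V, ∀ x, ψ (ρ x) = ρ (Φ x) := by
  have hwd : ∀ x y, ρ x = ρ y → ρ (Φ x) = ρ (Φ y) := fun x y h => by
    simpa [sub_eq_zero] using hΦ (x - y) (by simp [h])
  let s := Function.surjInv hρ
  have hs : ∀ v, ρ (s v) = v := Function.surjInv_eq hρ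
  refine ⟨{ toFun := fun v => ρ (Φ (s v))
            map_add' := fun v w => ?_
            map_smul' := fun c v => ?_ }, fun x => hwd _ _ (hs _)⟩
  · rw [hwd (s (v + w)) (s v + s w) (by simp [hs]), map_add, map_add]
  · obtain ⟨c, rfl⟩ := hπ c
    rw [hwd (s (π c • v)) (c • s v) (by simp [hs]), LinearMap.map_smulₛₗ, LinearMap.map_smulₛₗ,
      ← RingHom.comp_apply, ← hτ, RingHom.comp_apply]

end Reduction

namespace WittVector

variable {p : ℕ} [Fact p.Prime]

section CommRing

variable {k : Type*} [CommRing k] [CharP k p]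

instance : RingHomSurjective (constantCoeff : WittVector p k →+* k) :=
  ⟨constantCoeff_surjective p⟩

theorem frobenius_comp_constantCoeff :
    (_root_.frobenius k p).comp constantCoeff =
      (constantCoeff : WittVector p k →+* k).comp WittVector.frobenius := by
  ext x
  simp [constantCoeff_apply, coeff_frobenius_charP, frobenius_def]

variable [PerfectRing k p] {P ι : Type*} [AddCommGroup P] [Module (WittVector p k) P] [Fintype ι]
  (B : Module.Basis ι (WittVector p k) P)
  (Φ : P →ₛₗ[(WittVector.frobenius : WittVector p k →+* WittVector p k)] P)

theorem reduceCoords_constantCoeff_eq_zero_iff (x : P) :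
    B.reduceCoords constantCoeff x = 0 ↔ ∃ y, (p : WittVector p k) • y = x := by
  rw [B.reduceCoords_eq_zero_iff, ker_constantCoeff, mem_ideal_span_singleton_smul_top]

theorem exists_injective_reduction (hΦ : Function.Bijective Φ) :
    ∃ ψ : (ι → k) →ₛₗ[_root_.frobenius k p] (ι → k), Function.Injective ψ ∧
      ∀ x, ψ (B.reduceCoords constantCoeff x) = B.reduceCoords constantCoeff (Φ x) := by
  have hρ := reduceCoords_constantCoeff_eq_zero_iff B
  have hρ_surj := B.reduceCoords_surjective (constantCoeff_surjective p)
  have hΦp : ∀ y, Φ ((p : WittVector p k) • y) = (p : WittVector p k) • Φ y :=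
    map_natCast_smul Φ _ _ p
  obtain ⟨ψ, hψ⟩ := exists_semilinearMap_comp_eq (constantCoeff_surjective p)
    frobenius_comp_constantCoeff _ hρ_surj Φ fun x hx => by
      obtain ⟨y, rfl⟩ := (hρ x).mp hx
      exact (hρ _).mpr ⟨Φ y, (hΦp y).symm⟩
  refine ⟨ψ, (injective_iff_map_eq_zero ψ).mpr fun v hv => ?_, hψ⟩
  obtain ⟨x, rfl⟩ := hρ_surj v
  obtain ⟨y, hy⟩ := (hρ _).mp (hψ x ▸ hv)
  obtain ⟨z, rfl⟩ := hΦ.2 y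
  rw [← hΦp] at hy
  exact (hρ x).mpr ⟨z, hΦ.1 hy⟩

end CommRing

variable {k : Type*} [Field k] [CharP k p] [IsAlgClosed k] {P ι : Type*} [AddCommGroup P]
  [Module (WittVector p k) P] [Fintype ι] {B : Module.Basis ι (WittVector p k) P}
  {Φ : P →ₛₗ[(WittVector.frobenius : WittVector p k →+* WittVector p k)] P}
  (ψ : (ι → k) →ₛₗ[_root_.frobenius k p] (ι → k))
  (hψ : Function.Injective ψ)
  (hΦψ : ∀ x, ψ (B.reduceCoords constantCoeff x) = B.reduceCoords constantCoeff (Φ x))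
include hψ hΦψ

theorem exists_eq_sub_self_add_p_smul (z : P) :
    ∃ w y, z = (Φ w - w) + (p : WittVector p k) • y := by
  obtain ⟨u, hu⟩ := exists_sub_self_eq ψ hψ (B.reduceCoords constantCoeff z)
  obtain ⟨w, rfl⟩ := B.reduceCoords_surjective (constantCoeff_surjective p) u
  obtain ⟨y, hy⟩ := (reduceCoords_constantCoeff_eq_zero_iff B (z - (Φ w - w))).mp
    (by simp only [map_sub, ← hΦψ, hu, sub_self])
  exact ⟨w, y, by rw [hy]; abel⟩

theorem surjective_sub_self : Function.Surjective fun x => Φ x - x :=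
  have := B.isAdicComplete (Ideal.span {(p : WittVector p k)})
  surjective_of_forall_exists_eq_add_natCast_smul p (Φ.toAddMonoidHom - AddMonoidHom.id P)
    (exists_eq_sub_self_add_p_smul ψ hψ hΦψ)

theorem exists_fixed_reduceCoords_eq {v : ι → k} (hv : ψ v = v) :
    ∃ x, Φ x = x ∧ B.reduceCoords constantCoeff x = v := by
  have hρ := reduceCoords_constantCoeff_eq_zero_iff B
  obtain ⟨x₀, rfl⟩ := B.reduceCoords_surjective (constantCoeff_surjective p) v
  obtain ⟨z, hz⟩ := (hρ (Φ x₀ - x₀)).mp (by simp only [map_sub, ← hΦψ, hv, sub_self])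
  obtain ⟨w, hw⟩ := surjective_sub_self ψ hψ hΦψ (-z)
  refine ⟨x₀ + (p : WittVector p k) • w, ?_, ?_⟩
  · rw [map_add, map_natCast_smul Φ (WittVector p k) (WittVector p k),
      eq_add_of_sub_eq' hz.symm, eq_add_of_sub_eq' hw, smul_add, smul_neg]
    abel
  · rw [map_add, (hρ _).mpr ⟨w, rfl⟩, add_zero]

theorem span_fixed_eq_top : span (WittVector p k) {x | Φ x = x} = ⊤ := by
  set N := span (WittVector p k) {x | Φ x = x}
  have hN : span k {v | ψ v = v} ≤ N.map (B.reduceCoords constantCoeff) :=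
    span_le.mpr fun v hv =>
      let ⟨x, hx, hxv⟩ := exists_fixed_reduceCoords_eq ψ hψ hΦψ hv
      ⟨x, subset_span hx, hxv⟩
  have hsup : ⊤ ≤ N ⊔ Ideal.span {(p : WittVector p k)} • ⊤ := by
    intro x _
    obtain ⟨y, hy, hyx⟩ := hN (by rw [_root_.span_fixed_eq_top ψ hψ]; trivial :
      B.reduceCoords constantCoeff x ∈ _)
    obtain ⟨z, hz⟩ := (reduceCoords_constantCoeff_eq_zero_iff B (x - y)).mp
      (by rw [map_sub, hyx, sub_self])
    exact mem_sup.mpr ⟨y, hy, _, mem_ideal_span_singleton_smul_top.mpr ⟨z, rfl⟩, by rw [hz]; abel⟩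
  exact top_le_iff.mp (le_of_le_smul_of_le_jacobson_bot (Module.Finite.of_basis B).fg_top
    (IsAdicComplete.le_jacobson_bot _) hsup)

end WittVector

/-- Let `k` be an algebraically closed field of characteristic `p` and
`P` a finite free `W(k)`-module.  Let `Φ : P → P` be an additive bijection which is
Frobenius-semilinear.  Then `Φ − id` is surjective and the fixed points of `Φ` generate
`P` as a `W(k)`-module. -/
theorem fixed_points_generate
    (p : ℕ) [Fact p.Prime] (k : Type*) [Field k] [CharP k p] [IsAlgClosed k]
    (P : Type*) [AddCommGroup P] [Module (WittVector p k) P]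
    [Module.Finite (WittVector p k) P] [Module.Free (WittVector p k) P]
    (Φ : P →+ P) (hbij : Function.Bijective Φ)
    (hsemi : ∀ (c : WittVector p k) (x : P),
      Φ (c • x) = WittVector.frobenius c • Φ x) :
    Function.Surjective (fun x : P => Φ x - x) ∧
    Submodule.span (WittVector p k) {x : P | Φ x = x} = ⊤ := by
  let Φ' : P →ₛₗ[(WittVector.frobenius : WittVector p k →+* WittVector p k)] P :=
    { Φ with map_smul' := hsemi }
  obtain ⟨ψ, hψ, hΦψ⟩ := WittVector.exists_injective_reduction
    (Module.Free.chooseBasis (WittVector p k) P) Φ' (hbij : Function.Bijective Φ')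
  have hsurj := WittVector.surjective_sub_self ψ hψ hΦψ
  have hspan := WittVector.span_fixed_eq_top ψ hψ hΦψ
  exact ⟨hsurj, hspan⟩
end

section
/- Let p be a prime and A a perfect ring of characteristic p (pA = 0 and a ↦ a^p bijective on A). Then W(A) is p-adically complete and separated: the natural map W(A) → lim_n W(A)/pⁿW(A) is bijective. -/
/-- Let `p` be a prime and `A` a perfect ring of characteristic `p`.
Then `W(A)` is `p`-adically complete and separated. -/
theorem wittVector_p_adically_complete
    (p : ℕ) [Fact p.Prime] (A : Type*) [CommRing A] [CharP A p] [PerfectRing A p] :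
    IsAdicComplete (Ideal.span {(p : WittVector p A)}) (WittVector p A) :=
  WittVector.isAdicCompleteIdealSpanP
end

section
/- Let p be a prime and A a commutative ring. If 𝔞 and 𝔟 are ideals of A and x, y ∈ W(A) are Witt vectors such that every component of x lies in 𝔞 and every component of y lies in 𝔟, then every component of the product x·y lies in the product ideal 𝔞𝔟. Consequently, if 𝔞 is a nilpotent ideal with 𝔞^N = 0, then every product of N Witt vectors all of whose components lie in 𝔞 is zero; in particular W(𝔞) is a nilpotent ideal of W(A). -/
/-!
The components of a product of Witt vectors are the integral polynomials `wittMul p n` evaluated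
at the components of the factors. Since `x * 0 = 0 = 0 * y`, each `wittMul p n` vanishes when either
block of variables is set to zero, so it lies in the ideal generated by each block. For disjoint
sets of variables the intersection of these monomial ideals is their product, and evaluating at
the components of `x` and `y` sends that product into `𝔞 * 𝔟`. Nilpotency of `W(𝔞)` then follows
by induction on the number of factors.
-/

open MvPolynomial

namespace MvPolynomial

variable {σ R : Type*} [CommRing R]

theorem sub_mem_span_X_image {S : Set σ} (φ : MvPolynomial σ R →+* MvPolynomial σ R)
    (hC : ∀ r, φ (C r) = C r) (hS : ∀ v ∈ S, φ (X v) = 0) (hSc : ∀ v ∉ S, φ (X v) = X v)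
    (P : MvPolynomial σ R) : P - φ P ∈ Ideal.span (X '' S) := by
  set I : Ideal (MvPolynomial σ R) := Ideal.span (X '' S)
  have hmk : (Ideal.Quotient.mk I).comp φ = Ideal.Quotient.mk I := by
    refine ringHom_ext (fun r => by simp [hC]) fun v => ?_
    by_cases hv : v ∈ S
    · rw [RingHom.comp_apply, hS v hv, map_zero, eq_comm, Ideal.Quotient.eq_zero_iff_mem]
      exact Ideal.subset_span (Set.mem_image_of_mem X hv)
    · rw [RingHom.comp_apply, hSc v hv]
  rw [← Ideal.Quotient.eq]
  exact (RingHom.congr_fun hmk P).symm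

theorem mem_span_X_image_mul_of_disjoint {S₀ S₁ : Set σ} (hS : Disjoint S₀ S₁)
    {P : MvPolynomial σ R} (h₀ : P ∈ Ideal.span (X '' S₀)) (h₁ : P ∈ Ideal.span (X '' S₁)) :
    P ∈ Ideal.span (X '' S₀) * Ideal.span (X '' S₁) := by
  let T : Set (σ →₀ ℕ) := {d | ∃ v ∈ S₀, ∃ w ∈ S₁, d = Finsupp.single v 1 + Finsupp.single w 1}
  have hT : Ideal.span ((fun d => monomial d (1 : R)) '' T) ≤
      Ideal.span (X '' S₀) * Ideal.span (X '' S₁) := by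
    rw [Ideal.span_le]
    rintro _ ⟨_, ⟨v, hv, w, hw, rfl⟩, rfl⟩
    show monomial (Finsupp.single v 1 + Finsupp.single w 1) (1 : R) ∈ _
    rw [← one_mul (1 : R), ← monomial_mul]
    exact Ideal.mul_mem_mul (Ideal.subset_span ⟨v, hv, rfl⟩) (Ideal.subset_span ⟨w, hw, rfl⟩)
  refine hT (mem_ideal_span_monomial_image.2 fun d hd => ?_)
  obtain ⟨v, hv, hdv⟩ := mem_ideal_span_X_image.1 h₀ d hd
  obtain ⟨w, hw, hdw⟩ := mem_ideal_span_X_image.1 h₁ d hd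
  have hvw : v ≠ w := fun h => Set.disjoint_left.1 hS hv (h ▸ hw)
  refine ⟨_, ⟨v, hv, w, hw, rfl⟩, fun u => ?_⟩
  classical
  rw [Finsupp.add_apply, Finsupp.single_apply, Finsupp.single_apply]
  split_ifs <;> grind

theorem aeval_mem_mul_of_mem_span_X_image_mul {A : Type*} [CommRing A] [Algebra R A]
    {𝔞 𝔟 : Ideal A} {S₀ S₁ : Set σ} {a : σ → A} (ha : ∀ v ∈ S₀, a v ∈ 𝔞)
    (hb : ∀ v ∈ S₁, a v ∈ 𝔟) {P : MvPolynomial σ R}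
    (hP : P ∈ Ideal.span (X '' S₀) * Ideal.span (X '' S₁)) : aeval a P ∈ 𝔞 * 𝔟 := by
  have hmap : ∀ {S : Set σ} {𝔠 : Ideal A}, (∀ v ∈ S, a v ∈ 𝔠) →
      (Ideal.span (X '' S)).map (aeval a : MvPolynomial σ R →ₐ[R] A) ≤ 𝔠 := fun hS => by
    rw [Ideal.map_span, Ideal.span_le, Set.image_image]
    rintro _ ⟨v, hv, rfl⟩
    simpa using hS v hv
  have := Ideal.mem_map_of_mem (aeval a) hP
  rw [Ideal.map_mul] at this
  exact Ideal.mul_mono (hmap ha) (hmap hb) this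

end MvPolynomial

namespace WittVector

variable {p : ℕ} [Fact p.Prime]

theorem wittMul_mem_span_X_image (i : Fin 2) (n : ℕ) :
    wittMul p n ∈ Ideal.span (X '' {v : Fin 2 × ℕ | v.1 = i}) := by
  let w : Fin 2 → WittVector p (MvPolynomial (Fin 2 × ℕ) ℤ) := fun k =>
    if k = i then 0 else mk p fun j => X (k, j)
  have hzero : (w 0 * w 1).coeff n = 0 := by
    fin_cases i <;> simp [w]
  rw [mul_coeff] at hzero
  have h : wittMul p n - peval (wittMul p n) ![(w 0).coeff, (w 1).coeff] ∈
      Ideal.span (X '' {v : Fin 2 × ℕ | v.1 = i}) := by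
    refine sub_mem_span_X_image (aeval _).toRingHom (by simp) ?_ ?_ _ <;>
      rintro ⟨k, j⟩ hk <;> fin_cases k <;> fin_cases i <;> simp_all [w]
  rwa [hzero, sub_zero] at h

theorem coeff_mul_mem_mul {A : Type*} [CommRing A] {𝔞 𝔟 : Ideal A} {x y : WittVector p A}
    (hx : ∀ n, x.coeff n ∈ 𝔞) (hy : ∀ n, y.coeff n ∈ 𝔟) (n : ℕ) :
    (x * y).coeff n ∈ 𝔞 * 𝔟 := by
  have hdisj : Disjoint {v : Fin 2 × ℕ | v.1 = 0} {v | v.1 = 1} :=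
    Set.disjoint_left.2 fun v h₀ h₁ => by simp_all
  rw [mul_coeff, peval]
  refine aeval_mem_mul_of_mem_span_X_image_mul ?_ ?_ <|
    mem_span_X_image_mul_of_disjoint hdisj (wittMul_mem_span_X_image 0 n)
      (wittMul_mem_span_X_image 1 n)
  · rintro ⟨k, j⟩ rfl
    exact hx j
  · rintro ⟨k, j⟩ rfl
    exact hy j

theorem coeff_prod_mem_prod {A ι : Type*} [CommRing A] (s : Finset ι) (𝔞 : ι → Ideal A)
    (f : ι → WittVector p A) (hf : ∀ i ∈ s, ∀ n, (f i).coeff n ∈ 𝔞 i) (n : ℕ) :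
    (∏ i ∈ s, f i).coeff n ∈ ∏ i ∈ s, 𝔞 i := by
  classical
  induction s using Finset.induction_on generalizing n with
  | empty => simp
  | insert i s hi ih =>
    rw [Finset.prod_insert hi, Finset.prod_insert hi]
    exact coeff_mul_mem_mul (hf i (s.mem_insert_self i))
      (ih fun j hj => hf j (Finset.mem_insert_of_mem hj)) n

end WittVector

/-- If all components of `x` lie in `𝔞` and all components of `y` lie
in `𝔟`, then all components of `x·y` lie in `𝔞𝔟`.  Consequently, if `𝔞 ^ N = 0`, then
any product of `N` Witt vectors with components in `𝔞` is zero; in particular `W(𝔞)` is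
a nilpotent ideal of `W(A)`. -/
theorem wittVector_mul_coeff_mem_and_nilpotent
    (p : ℕ) [Fact p.Prime] (A : Type*) [CommRing A] :
    (∀ (𝔞 𝔟 : Ideal A) (x y : WittVector p A),
      (∀ n, x.coeff n ∈ 𝔞) → (∀ n, y.coeff n ∈ 𝔟) →
      ∀ n, (x * y).coeff n ∈ 𝔞 * 𝔟) ∧
    (∀ (𝔞 : Ideal A) (N : ℕ), 𝔞 ^ N = ⊥ →
      ∀ f : Fin N → WittVector p A,
        (∀ i n, (f i).coeff n ∈ 𝔞) → ∏ i, f i = 0) := by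
  refine ⟨fun 𝔞 𝔟 x y hx hy => WittVector.coeff_mul_mem_mul hx hy, fun 𝔞 N hN f hf => ?_⟩
  ext n
  have := WittVector.coeff_prod_mem_prod Finset.univ (fun _ => 𝔞) f (fun i _ => hf i) n
  rw [Finset.prod_const, Finset.card_univ, Fintype.card_fin, hN, Ideal.mem_bot] at this
  rw [this, WittVector.zero_coeff]
end
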